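/- arXiv:2401.14659 — 9 statements merged into one kernel-verified Lean document; each statement's English description precedes it below -/
import Mathlib

section
/- Let f : ℝ → ℝ be twice continuously differentiable with f ≥ 0 and with bounded second derivative. Then for every x ∈ ℝ, |f'(x)| ≤ 2 ‖f''‖_∞^{1/2} · √(f(x)). -/
/-- If `f : ℝ → ℝ` is C², nonnegative, and `K` bounds `|f''|`, then
`|f'(x)| ≤ 2 √K √(f x)` for every `x`. -/
theorem stmt_0 (f : ℝ → ℝ) (K : ℝ)
    (hf : ContDiff ℝ 2 f) (hpos : ∀ x, 0 ≤ f x)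
    (hK : ∀ x, |deriv (deriv f) x| ≤ K) :
    ∀ x : ℝ, |deriv f x| ≤ 2 * Real.sqrt K * Real.sqrt (f x) := by
  have hK0 : 0 ≤ K := le_trans (abs_nonneg _) (hK 0)
  have hdf : Differentiable ℝ f := hf.differentiable (by norm_num)
  have hddf : Differentiable ℝ (deriv f) := by
    have h2 := (contDiff_succ_iff_deriv (n := 1)).mp (by norm_num [hf] : ContDiff ℝ (1+1) f)
    exact h2.2.2.differentiable one_ne_zero
  -- Lipschitz bound on deriv f
  have lip : ∀ a b : ℝ, |deriv f a - deriv f b| ≤ K * |a - b| := by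
    intro a b
    have := Convex.norm_image_sub_le_of_norm_hasDerivWithin_le
      (f := deriv f) (f' := deriv (deriv f)) (s := Set.univ)
      (fun y _ => (hddf y).hasDerivAt.hasDerivWithinAt)
      (fun y _ => hK y) convex_univ (Set.mem_univ b) (Set.mem_univ a)
    simpa [Real.norm_eq_abs] using this
  intro x
  set A := deriv f x with hA
  -- key quadratic lower bound
  have key : ∀ h : ℝ, 0 ≤ f x + A * h + K * h ^ 2 := by
    intro h
    have taylor : |(f (x + h) - A * (x + h)) - (f x - A * x)| ≤ (K * |h|) * |x + h - x| := by
      have := Convex.norm_image_sub_le_of_norm_hasDerivWithin_le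
        (f := fun t => f t - A * t) (f' := fun t => deriv f t - A)
        (s := Metric.closedBall x |h|) (x := x) (y := x + h)
        (fun y _ => by
          convert ((hdf y).hasDerivAt.sub ((hasDerivAt_id y).const_mul A)).hasDerivWithinAt using 1; rfl; ring)
        (fun y hy => by
          have h1 : |deriv f y - A| ≤ K * |y - x| := lip y x
          have hy' : |y - x| ≤ |h| := by
            simpa [Real.dist_eq] using Metric.mem_closedBall.mp hy
          calc ‖deriv f y - A‖ = |deriv f y - A| := rfl
            _ ≤ K * |y - x| := h1
            _ ≤ K * |h| := by nlinarith [abs_nonneg (y - x)])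
        (convex_closedBall x |h|)
        (Metric.mem_closedBall.mpr (by simp [Real.dist_eq, abs_nonneg]))
        (Metric.mem_closedBall.mpr (by simp [Real.dist_eq, add_sub_cancel_left]))
      simpa [Real.norm_eq_abs] using this
    have habs : |f (x + h) - f x - A * h| ≤ K * h ^ 2 := by
      have e : (f (x + h) - A * (x + h)) - (f x - A * x) = f (x + h) - f x - A * h := by ring
      have e2 : (K * |h|) * |x + h - x| = K * h ^ 2 := by
        rw [show x + h - x = h by ring]
        rw [show K * |h| * |h| = K * (|h| * |h|) by ring, abs_mul_abs_self]
        ring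
      rw [e, e2] at taylor; exact taylor
    have h2 : f (x + h) - f x - A * h ≤ K * h ^ 2 := (abs_le.mp habs).2
    have := hpos (x + h)
    linarith
  rcases eq_or_lt_of_le hK0 with hK0' | hKpos
  · have hA0 : A = 0 := by
      by_contra hne
      have h1 := key (-(f x + 1) / A)
      have he : A * (-(f x + 1) / A) = -(f x + 1) := by field_simp
      rw [← hK0'] at h1
      nlinarith
    rw [hA0]
    simp only [abs_zero]
    positivity
  · have hsq : A ^ 2 ≤ 4 * K * f x := by
      have h1 := key (-A / (2 * K))
      have e1 : A * (-A / (2 * K)) = -(A ^ 2) / (2 * K) := by field_simp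
      have e2 : K * (-A / (2 * K)) ^ 2 = A ^ 2 / (4 * K) := by field_simp; ring
      rw [e1, e2] at h1
      have h3 : -(A ^ 2) / (2 * K) + A ^ 2 / (4 * K) = -(A ^ 2 / (4 * K)) := by
        field_simp; ring
      have h4 : A ^ 2 / (4 * K) ≤ f x := by linarith [h3 ▸ (by linarith : 0 ≤ f x + (-(A ^ 2) / (2 * K) + A ^ 2 / (4 * K)))]
      calc A ^ 2 = (A ^ 2 / (4 * K)) * (4 * K) := by field_simp
        _ ≤ f x * (4 * K) := by nlinarith
        _ = 4 * K * f x := by ring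
    have hle : |A| ≤ Real.sqrt (4 * K * f x) := by
      rw [← Real.sqrt_sq_eq_abs]
      exact Real.sqrt_le_sqrt hsq
    have heq : Real.sqrt (4 * K * f x) = 2 * Real.sqrt K * Real.sqrt (f x) := by
      rw [show 4 * K * f x = (2:ℝ)^2 * (K * f x) by ring,
        Real.sqrt_mul (by positivity), Real.sqrt_sq (by norm_num),
        Real.sqrt_mul hK0]
      ring
    linarith [heq ▸ hle]
end

section
/- Let f : ℝ → ℝ be C² with f ≥ 0, ‖f'‖_∞ ≤ K and ‖f''‖_∞ ≤ K for some K ≥ 0. Then for all x, y ∈ ℝ: |f'(x−y)| ≤ 2(1+K) · max{|y|, √(f(x))} and f(x−y) ≤ 2(1+K) · max{y², f(x)}. -/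
/-- If `f : ℝ → ℝ` is C², nonnegative, with `|f'| ≤ K` and `|f''| ≤ K`, then
`|f'(x−y)| ≤ 2(1+K) max{|y|, √(f x)}` and `f(x−y) ≤ 2(1+K) max{y², f x}`. -/
theorem stmt_1 (f : ℝ → ℝ) (K : ℝ) (hK : 0 ≤ K)
    (hf : ContDiff ℝ 2 f) (hpos : ∀ x, 0 ≤ f x)
    (h1 : ∀ x, |deriv f x| ≤ K) (h2 : ∀ x, |deriv (deriv f) x| ≤ K) :
    ∀ x y : ℝ,
      |deriv f (x - y)| ≤ 2 * (1 + K) * max |y| (Real.sqrt (f x)) ∧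
      f (x - y) ≤ 2 * (1 + K) * max (y ^ 2) (f x) := by
  have hd1 : Differentiable ℝ f := hf.differentiable two_ne_zero
  have hd2 : Differentiable ℝ (deriv f) := by
    have h : ContDiff ℝ ((1:ℕ)+1) f := by exact_mod_cast hf
    exact ((contDiff_succ_iff_deriv.mp h).2.2).differentiable (by simp)
  -- Lipschitz bound on deriv f
  have lip : ∀ a b : ℝ, |deriv f a - deriv f b| ≤ K * |a - b| := by
    intro a b
    have := Convex.norm_image_sub_le_of_norm_hasDerivWithin_le
      (f := deriv f) (f' := deriv (deriv f)) (s := Set.univ) (C := K)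
      (fun x _ => ((hd2 x).hasDerivAt).hasDerivWithinAt)
      (fun x _ => by simpa using h2 x) convex_univ (Set.mem_univ b) (Set.mem_univ a)
    simpa [Real.norm_eq_abs] using this
  -- Taylor-type bound
  have taylor : ∀ z t : ℝ, |f (z + t) - f z - t * deriv f z| ≤ K * t ^ 2 := by
    intro z t
    set c := deriv f z with hc
    have hg : ∀ s : ℝ, HasDerivAt (fun s => f s - c * s) (deriv f s - c) s := by
      intro s
      exact ((hd1 s).hasDerivAt).sub (by simpa using (hasDerivAt_id s).const_mul c)
    have key := Convex.norm_image_sub_le_of_norm_hasDerivWithin_le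
      (f := fun s => f s - c * s) (f' := fun s => deriv f s - c)
      (s := Metric.closedBall z |t|) (C := K * |t|) (x := z) (y := z + t)
      (fun x _ => (hg x).hasDerivWithinAt)
      (fun x hx => by
        have hx' : |x - z| ≤ |t| := by simpa [Real.dist_eq] using hx
        have := lip x z
        calc ‖deriv f x - c‖ = |deriv f x - deriv f z| := by rw [hc]; rfl
          _ ≤ K * |x - z| := lip x z
          _ ≤ K * |t| := by nlinarith [abs_nonneg (x - z)])
      (convex_closedBall z |t|)
      (Metric.mem_closedBall_self (abs_nonneg t))
      (by simp [Metric.mem_closedBall, Real.dist_eq])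
    have h' : |f (z + t) - c * (z + t) - (f z - c * z)| ≤ K * |t| * |t| := by
      simpa [Real.norm_eq_abs, add_sub_cancel_left] using key
    have e1 : f (z + t) - c * (z + t) - (f z - c * z) = f (z + t) - f z - t * c := by ring
    have e2 : K * |t| * |t| = K * t ^ 2 := by
      rw [mul_assoc, abs_mul_abs_self]; ring
    rw [e1, e2] at h'
    exact h'
  -- key: (f')² ≤ 4 K f
  have hsq : ∀ z : ℝ, (deriv f z) ^ 2 ≤ 4 * K * f z := by
    intro z
    rcases eq_or_lt_of_le hK with h0 | hKpos
    · have : deriv f z = 0 := by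
        have := h1 z; rw [← h0] at this
        exact abs_eq_zero.mp (le_antisymm this (abs_nonneg _))
      rw [this, ← h0]; nlinarith [hpos z]
    · set A := deriv f z with hA
      set t := -A / (2 * K) with ht
      have hT := (abs_le.mp (taylor z t)).2
      have h0 : 0 ≤ f z + t * A + K * t ^ 2 := by nlinarith [hpos (z + t)]
      have htA : t * A = -(A ^ 2) / (2 * K) := by rw [ht]; ring
      have ht2 : K * t ^ 2 = A ^ 2 / (4 * K) := by
        rw [ht]; field_simp; ring
      rw [htA, ht2] at h0
      have hKne : K ≠ 0 := ne_of_gt hKpos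
      have h0' : 0 ≤ f z - A ^ 2 / (4 * K) := by
        have : -(A ^ 2) / (2 * K) + A ^ 2 / (4 * K) = -(A ^ 2 / (4 * K)) := by
          field_simp; ring
        linarith [h0, this]
      have := mul_le_mul_of_nonneg_left (by linarith : A ^ 2 / (4 * K) ≤ f z) (by linarith : (0:ℝ) ≤ 4 * K)
      calc A ^ 2 = 4 * K * (A ^ 2 / (4 * K)) := by field_simp
        _ ≤ 4 * K * f z := this
  -- main
  intro x y
  set A := |deriv f x| with hA
  set s := Real.sqrt (f x) with hs
  have hs0 : 0 ≤ s := Real.sqrt_nonneg _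
  have hs2 : s ^ 2 = f x := Real.sq_sqrt (hpos x)
  have hA0 : 0 ≤ A := abs_nonneg _
  have hA2 : A ^ 2 ≤ 4 * K * s ^ 2 := by rw [sq_abs, hs2]; exact hsq x
  constructor
  · set M := max |y| s with hM
    have hyM : |y| ≤ M := le_max_left _ _
    have hsM : s ≤ M := le_max_right _ _
    have hM0 : 0 ≤ M := le_trans hs0 hsM
    have hstep : |deriv f (x - y)| ≤ A + K * |y| := by
      have := lip (x - y) x
      have e : |x - y - x| = |y| := by rw [show x - y - x = -y by ring, abs_neg]
      rw [e] at this
      calc |deriv f (x - y)| = |(deriv f (x - y) - deriv f x) + deriv f x| := by ring_nf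
        _ ≤ |deriv f (x - y) - deriv f x| + A := abs_add_le _ _
        _ ≤ K * |y| + A := by linarith
        _ = A + K * |y| := by ring
    have hAM : A ≤ (2 + K) * M := by
      apply le_of_pow_le_pow_left₀ two_ne_zero (by positivity)
      have hs2M : s ^ 2 ≤ M ^ 2 := by nlinarith
      have h4K : 4 * K * s ^ 2 ≤ 4 * K * M ^ 2 :=
        mul_le_mul_of_nonneg_left hs2M (by linarith)
      nlinarith [sq_nonneg M, sq_nonneg (K * M)]
    calc |deriv f (x - y)| ≤ A + K * |y| := hstep
      _ ≤ (2 + K) * M + K * M := by nlinarith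
      _ = 2 * (1 + K) * M := by ring
  · set N := max (y ^ 2) (f x) with hN
    have hyN : y ^ 2 ≤ N := le_max_left _ _
    have hfN : f x ≤ N := le_max_right _ _
    have hN0 : 0 ≤ N := le_trans (sq_nonneg y) hyN
    have hT := (abs_le.mp (taylor x (-y))).2
    have e : x + -y = x - y := by ring
    rw [e] at hT
    have hub : f (x - y) ≤ f x + |y| * A + K * y ^ 2 := by
      have : -y * deriv f x ≤ |y| * A := by
        calc -y * deriv f x ≤ |(-y) * deriv f x| := le_abs_self _
          _ = |y| * A := by rw [abs_mul, abs_neg]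
      nlinarith
    have hyA : |y| * A ≤ (1 + K) * N := by
      apply le_of_pow_le_pow_left₀ two_ne_zero (by positivity)
      have h1' : (|y| * A) ^ 2 = y ^ 2 * A ^ 2 := by rw [mul_pow, sq_abs]
      have h2' : y ^ 2 * s ^ 2 ≤ N * N := mul_le_mul hyN (by rw [hs2]; exact hfN) (sq_nonneg _) hN0
      have h3' : y ^ 2 * A ^ 2 ≤ y ^ 2 * (4 * K * s ^ 2) :=
        mul_le_mul_of_nonneg_left hA2 (sq_nonneg y)
      have h4' : 4 * K * (y ^ 2 * s ^ 2) ≤ 4 * K * (N * N) :=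
        mul_le_mul_of_nonneg_left h2' (by linarith)
      nlinarith [sq_nonneg ((1 - K) * N)]
    calc f (x - y) ≤ f x + |y| * A + K * y ^ 2 := hub
      _ ≤ N + (1 + K) * N + K * N := by nlinarith
      _ = 2 * (1 + K) * N := by ring
end

section
/- For any a, b, c ∈ ℝ with a ≠ 0, and for all y with y²+4a² ≠ 0, the following identity holds: (3y·P̃₄(y) − 4y³·Q̃₄(y))/16 = d/dy [ 8abc(2ac−b²) y³/(y²+4a²)³ ] − d/dy [ 3bc² y³/(y²+4a²)² ] + d/dy [ 4bc² y⁵/(y²+4a²)³ ], where P̃₄(y) = 16bc²(y³−12a²y)/(y²+4a²)³ + 128abc(2ac−b²)y/(y²+4a²)³ and Q̃₄(y) = 16bc²(y³−20a²y)/(y²+4a²)⁴ + 192abc(2ac−b²)y/(y²+4a²)⁴. -/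
/-- The cancellation identity (2.45): with
`P̃₄(y) = 16bc²(y³−12a²y)/(y²+4a²)³ + 128abc(2ac−b²)y/(y²+4a²)³` and
`Q̃₄(y) = 16bc²(y³−20a²y)/(y²+4a²)⁴ + 192abc(2ac−b²)y/(y²+4a²)⁴`,
the combination `(3y P̃₄(y) − 4y³ Q̃₄(y))/16` is the derivative of
`y ↦ 8abc(2ac−b²)y³/(y²+4a²)³ − 3bc²y³/(y²+4a²)² + 4bc²y⁵/(y²+4a²)³`. -/
theorem stmt_4 (a b c : ℝ) (ha : a ≠ 0) (y : ℝ) (h : y ^ 2 + 4 * a ^ 2 ≠ 0) :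
    HasDerivAt (fun t : ℝ =>
        8 * a * b * c * (2 * a * c - b ^ 2) * t ^ 3 / (t ^ 2 + 4 * a ^ 2) ^ 3
          - 3 * b * c ^ 2 * t ^ 3 / (t ^ 2 + 4 * a ^ 2) ^ 2
          + 4 * b * c ^ 2 * t ^ 5 / (t ^ 2 + 4 * a ^ 2) ^ 3)
      ((3 * y * (16 * b * c ^ 2 * (y ^ 3 - 12 * a ^ 2 * y) / (y ^ 2 + 4 * a ^ 2) ^ 3
            + 128 * a * b * c * (2 * a * c - b ^ 2) * y / (y ^ 2 + 4 * a ^ 2) ^ 3)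
          - 4 * y ^ 3 * (16 * b * c ^ 2 * (y ^ 3 - 20 * a ^ 2 * y) / (y ^ 2 + 4 * a ^ 2) ^ 4
            + 192 * a * b * c * (2 * a * c - b ^ 2) * y / (y ^ 2 + 4 * a ^ 2) ^ 4)) / 16) y := by
  have hy : HasDerivAt (fun t : ℝ => t) 1 y := hasDerivAt_id y
  have hd : HasDerivAt (fun t : ℝ => t ^ 2 + 4 * a ^ 2) (2 * y) y := by
    simpa using ((hasDerivAt_pow 2 y).add_const (4 * a ^ 2))
  have h2 : (y ^ 2 + 4 * a ^ 2) ^ 2 ≠ 0 := pow_ne_zero _ h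
  have h3 : (y ^ 2 + 4 * a ^ 2) ^ 3 ≠ 0 := pow_ne_zero _ h
  have hd2 : HasDerivAt (fun t : ℝ => (t ^ 2 + 4 * a ^ 2) ^ 2)
      (2 * (y ^ 2 + 4 * a ^ 2) * (2 * y)) y := by
    simpa using hd.fun_pow 2
  have hd3 : HasDerivAt (fun t : ℝ => (t ^ 2 + 4 * a ^ 2) ^ 3)
      (3 * (y ^ 2 + 4 * a ^ 2) ^ 2 * (2 * y)) y := by
    simpa using hd.fun_pow 3
  have ht3 : HasDerivAt (fun t : ℝ => t ^ 3) (3 * y ^ 2) y := by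
    simpa using hasDerivAt_pow 3 y
  have ht5 : HasDerivAt (fun t : ℝ => t ^ 5) (5 * y ^ 4) y := by
    simpa using hasDerivAt_pow 5 y
  have H1 := ((ht3.const_mul (8 * a * b * c * (2 * a * c - b ^ 2))).fun_div hd3 h3)
  have H2 := ((ht3.const_mul (3 * b * c ^ 2)).fun_div hd2 h2)
  have H3 := ((ht5.const_mul (4 * b * c ^ 2)).fun_div hd3 h3)
  have H := (H1.fun_sub H2).fun_add H3
  refine H.congr_deriv ?_
  field_simp
  ring
end

section
/- For any a, b, c ∈ ℝ with a ≠ 0, and for all y with y²+4a² ≠ 0: (2y³·Ṽ₄(y) − y·Ũ₄(y))/32 = −d/dy [ 2b³(4ac+b²) y⁵/(3(y²+4a²)⁴) ] + d/dy [ b³(4ac+b²) y³/(3(y²+4a²)³) ] − d/dy [ 16a²b³(2ac−b²) y³/(3(y²+4a²)⁴) ], where Ũ₄(y) = 128ab³c·y/(y²+4a²)³ + 32b⁵·y/(y²+4a²)³ − 768a²b⁵·y/(y²+4a²)⁴ and Ṽ₄(y) = 128ab³c·y/(y²+4a²)⁴ + 32b⁵·y/(y²+4a²)⁴ − 1024a²b⁵·y/(y²+4a²)⁵.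 -/
/-- The cancellation identity (2.61): with
`Ũ₄(y) = 128ab³c·y/(y²+4a²)³ + 32b⁵·y/(y²+4a²)³ − 768a²b⁵·y/(y²+4a²)⁴` and
`Ṽ₄(y) = 128ab³c·y/(y²+4a²)⁴ + 32b⁵·y/(y²+4a²)⁴ − 1024a²b⁵·y/(y²+4a²)⁵`,
the combination `(2y³ Ṽ₄(y) − y Ũ₄(y))/32` is the derivative of
`y ↦ −2b³(4ac+b²)y⁵/(3(y²+4a²)⁴) + b³(4ac+b²)y³/(3(y²+4a²)³) − 16a²b³(2ac−b²)y³/(3(y²+4a²)⁴)`. -/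
theorem stmt_5 (a b c : ℝ) (ha : a ≠ 0) (y : ℝ) (h : y ^ 2 + 4 * a ^ 2 ≠ 0) :
    HasDerivAt (fun t : ℝ =>
        -(2 * b ^ 3 * (4 * a * c + b ^ 2) * t ^ 5 / (3 * (t ^ 2 + 4 * a ^ 2) ^ 4))
          + b ^ 3 * (4 * a * c + b ^ 2) * t ^ 3 / (3 * (t ^ 2 + 4 * a ^ 2) ^ 3)
          - 16 * a ^ 2 * b ^ 3 * (2 * a * c - b ^ 2) * t ^ 3 / (3 * (t ^ 2 + 4 * a ^ 2) ^ 4))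
      ((2 * y ^ 3 * (128 * a * b ^ 3 * c * y / (y ^ 2 + 4 * a ^ 2) ^ 4
            + 32 * b ^ 5 * y / (y ^ 2 + 4 * a ^ 2) ^ 4
            - 1024 * a ^ 2 * b ^ 5 * y / (y ^ 2 + 4 * a ^ 2) ^ 5)
          - y * (128 * a * b ^ 3 * c * y / (y ^ 2 + 4 * a ^ 2) ^ 3
            + 32 * b ^ 5 * y / (y ^ 2 + 4 * a ^ 2) ^ 3
            - 768 * a ^ 2 * b ^ 5 * y / (y ^ 2 + 4 * a ^ 2) ^ 4)) / 32) y := by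
  have hQ : ∀ t : ℝ, t ^ 2 + 4 * a ^ 2 ≠ 0 := fun t => by positivity
  -- rewrite the function as a single rational function with denominator 3(t²+4a²)⁴
  have hfun : (fun t : ℝ =>
        -(2 * b ^ 3 * (4 * a * c + b ^ 2) * t ^ 5 / (3 * (t ^ 2 + 4 * a ^ 2) ^ 4))
          + b ^ 3 * (4 * a * c + b ^ 2) * t ^ 3 / (3 * (t ^ 2 + 4 * a ^ 2) ^ 3)
          - 16 * a ^ 2 * b ^ 3 * (2 * a * c - b ^ 2) * t ^ 3 / (3 * (t ^ 2 + 4 * a ^ 2) ^ 4))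
      = fun t : ℝ =>
        (-(2 * b ^ 3 * (4 * a * c + b ^ 2)) * t ^ 5
          + b ^ 3 * (4 * a * c + b ^ 2) * t ^ 3 * (t ^ 2 + 4 * a ^ 2)
          - 16 * a ^ 2 * b ^ 3 * (2 * a * c - b ^ 2) * t ^ 3)
          / (3 * (t ^ 2 + 4 * a ^ 2) ^ 4) := by
    funext t
    have := hQ t
    field_simp
  rw [hfun]
  have hid : HasDerivAt (fun t : ℝ => t) 1 y := hasDerivAt_id y
  have h5 : HasDerivAt (fun t : ℝ => t ^ 5) (5 * y ^ 4) y := by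
    simpa using hasDerivAt_pow 5 y
  have h3 : HasDerivAt (fun t : ℝ => t ^ 3) (3 * y ^ 2) y := by
    simpa using hasDerivAt_pow 3 y
  have hq : HasDerivAt (fun t : ℝ => t ^ 2 + 4 * a ^ 2) (2 * y) y := by
    simpa using (hid.pow 2).add_const (4 * a ^ 2)
  have hnum : HasDerivAt (fun t : ℝ =>
      -(2 * b ^ 3 * (4 * a * c + b ^ 2)) * t ^ 5
        + b ^ 3 * (4 * a * c + b ^ 2) * t ^ 3 * (t ^ 2 + 4 * a ^ 2)
        - 16 * a ^ 2 * b ^ 3 * (2 * a * c - b ^ 2) * t ^ 3)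
      (-(2 * b ^ 3 * (4 * a * c + b ^ 2)) * (5 * y ^ 4)
        + (b ^ 3 * (4 * a * c + b ^ 2) * (3 * y ^ 2) * (y ^ 2 + 4 * a ^ 2)
          + b ^ 3 * (4 * a * c + b ^ 2) * y ^ 3 * (2 * y))
        - 16 * a ^ 2 * b ^ 3 * (2 * a * c - b ^ 2) * (3 * y ^ 2)) y := by
    exact ((h5.const_mul _).add (((h3.const_mul (b ^ 3 * (4 * a * c + b ^ 2))).mul hq))).sub
      (h3.const_mul _)
  have hden : HasDerivAt (fun t : ℝ => 3 * (t ^ 2 + 4 * a ^ 2) ^ 4)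
      (3 * (4 * (y ^ 2 + 4 * a ^ 2) ^ 3 * (2 * y))) y := by
    exact (hq.fun_pow 4).const_mul 3
  have hden_ne : (3 : ℝ) * (y ^ 2 + 4 * a ^ 2) ^ 4 ≠ 0 := by
    have := hQ y; positivity
  have := hnum.fun_div hden hden_ne
  refine this.congr_deriv ?_
  have hy := hQ y
  field_simp
  ring
end

section
/- Define Θ_π(y,r) = (1/2)·sinh(y)/(cosh(y) − cos(r)) for y ≠ 0. Then for all |y| ≥ 1 and all r ∈ ℝ: |Θ_π(y,r) − (sgn y)·(1/2)| ≤ 1/(e^{|y|} − 2). -/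
lemma aux8 (y r : ℝ) (hy : 1 ≤ y) :
    |1 / 2 * Real.sinh y / (Real.cosh y - Real.cos r) - 1 / 2| ≤
      1 / (Real.exp y - 2) := by
  set t := Real.exp y with htdef
  have ht : 2.7 < t := by
    have h1 : Real.exp 1 ≤ t := Real.exp_le_exp.mpr hy
    have := Real.exp_one_gt_d9
    linarith
  have htpos : 0 < t := by linarith
  have hu : t * t⁻¹ = 1 := mul_inv_cancel₀ (ne_of_gt htpos)
  have hupos : 0 < t⁻¹ := by positivity
  have hule : t⁻¹ ≤ 1 := by
    rw [inv_le_one_iff₀]; right; linarith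
  have hsinh : Real.sinh y = (t - t⁻¹) / 2 := by
    rw [Real.sinh_eq, Real.exp_neg]
  have hcosh : Real.cosh y = (t + t⁻¹) / 2 := by
    rw [Real.cosh_eq, Real.exp_neg]
  have hc1 : -1 ≤ Real.cos r := Real.neg_one_le_cos r
  have hc2 : Real.cos r ≤ 1 := Real.cos_le_one r
  set c := Real.cos r
  have hD : 0 < Real.cosh y - c := by rw [hcosh]; nlinarith
  have h2 : 0 < t - 2 := by linarith
  rw [abs_sub_le_iff]
  constructor
  · rw [div_sub' (ne_of_gt hD), div_le_div_iff₀ hD h2, hcosh, hsinh]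
    nlinarith [mul_nonneg (le_of_lt htpos) (sub_nonneg.mpr hc2)]
  · rw [sub_div' (ne_of_gt hD), div_le_div_iff₀ hD h2, hcosh, hsinh]
    nlinarith [mul_nonneg (le_of_lt htpos) (by linarith : (0:ℝ) ≤ 1 + c),
      mul_pos htpos h2, mul_pos h2 hupos]

/-- For `|y| ≥ 1`, the strip kernel `Θ_π(y,r) = (1/2) sinh y/(cosh y − cos r)` is within
`1/(e^{|y|} − 2)` of `(sgn y)/2`, uniformly in `r`. -/
theorem stmt_8 (y r : ℝ) (hy : 1 ≤ |y|) :
    |1 / 2 * Real.sinh y / (Real.cosh y - Real.cos r) - Real.sign y * (1 / 2)| ≤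
      1 / (Real.exp |y| - 2) := by
  rcases le_or_gt 1 y with h | h
  · rw [abs_of_nonneg (by linarith : (0:ℝ) ≤ y)] at *
    rw [Real.sign_of_pos (by linarith : (0:ℝ) < y), one_mul]
    exact aux8 y r h
  · have hneg : y ≤ -1 := by
      rcases abs_cases y with ⟨h1, _⟩ | ⟨h1, _⟩ <;> linarith
    have hy' : 1 ≤ -y := by linarith
    rw [abs_of_neg (by linarith : y < 0)]
    rw [Real.sign_of_neg (by linarith : y < 0)]
    have key := aux8 (-y) r hy'
    rw [Real.sinh_neg, Real.cosh_neg] at key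
    have heq : 1 / 2 * Real.sinh y / (Real.cosh y - Real.cos r) - -1 * (1 / 2)
        = -(1 / 2 * -Real.sinh y / (Real.cosh y - Real.cos r) - 1 / 2) := by
      ring
    rw [heq, abs_neg]
    exact key
end

section
/- Let f : ℝ → ℝ be C² with f ≥ 0, and suppose ‖f‖_{C²_γ} := ‖f'‖_{C¹} + sup_{|x−y|≥1}|f(x)−f(y)|/|x−y|^{1−γ} < ∞ for some γ ∈ (0,1/2]. Then for every x ∈ ℝ and every measurable S ⊆ [0,∞), the principal value integral PV ∫_{S∪(−S)} y/(y² + (f(x) + f(x−y))²) dy exists and satisfies |PV ∫_{S∪(−S)} y/(y² + (f(x)+f(x−y))²) dy| ≤ C_γ ‖f‖_{C²_γ}, where C_γ depends only on γ. The same bound holds with f(x) − f(x−y) in place of f(x) + f(x−y). -/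
open MeasureTheory

set_option maxHeartbeats 1000000
section MuskatAux
open Set


-- Lipschitz from deriv bound
private lemma lip_aux {g : ℝ → ℝ} {N : ℝ} (hg : Differentiable ℝ g)
    (hb : ∀ z, |deriv g z| ≤ N) (z w : ℝ) : |g z - g w| ≤ N * |z - w| := by
  have := Convex.norm_image_sub_le_of_norm_deriv_le (s := Set.univ)
    (fun t _ => hg t) (fun t _ => by simpa [Real.norm_eq_abs] using hb t)
    convex_univ (Set.mem_univ w) (Set.mem_univ z)
  simpa [Real.norm_eq_abs] using this

-- second difference bound
private lemma second_diff {f : ℝ → ℝ} {N : ℝ} (hf : ContDiff ℝ 2 f)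
    (hd : ∀ z, |deriv f z| ≤ N) (hdd : ∀ z, |deriv (deriv f) z| ≤ N)
    (x y : ℝ) (hy : 0 ≤ y) : |f (x + y) + f (x - y) - 2 * f x| ≤ 2 * N * y ^ 2 := by
  have hfd : Differentiable ℝ f := hf.differentiable two_ne_zero
  have h2 : ContDiff ℝ (1 + 1) f := by rwa [one_add_one_eq_two]
  have hdf : Differentiable ℝ (deriv f) :=
    ((contDiff_succ_iff_deriv.mp h2).2.2).differentiable one_ne_zero
  have lipd := lip_aux hdf hdd
  set h : ℝ → ℝ := fun t => f (x + t) + f (x - t) with hh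
  have hder : ∀ t : ℝ, HasDerivAt h (deriv f (x + t) - deriv f (x - t)) t := by
    intro t
    have h1 : HasDerivAt (fun t : ℝ => f (x + t)) (deriv f (x + t) * 1) t :=
      (hfd (x + t)).hasDerivAt.comp t ((hasDerivAt_id t).const_add x)
    have h2' : HasDerivAt (fun t : ℝ => f (x - t)) (deriv f (x - t) * (-1)) t :=
      (hfd (x - t)).hasDerivAt.comp t ((hasDerivAt_id t).const_sub x)
    have := h1.add h2'; simp only [mul_one, mul_neg, ← sub_eq_add_neg] at this; exact this
  have key := Convex.norm_image_sub_le_of_norm_deriv_le (s := Set.Icc 0 y) (f := h)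
    (fun t _ => (hder t).differentiableAt)
    (fun t ht => by
      rw [(hder t).deriv, Real.norm_eq_abs]
      have := lipd (x + t) (x - t)
      have h1 : |(x + t) - (x - t)| = 2 * |t| := by rw [show (x+t)-(x-t) = 2*t by ring, abs_mul]; norm_num
      rw [h1] at this
      have ht1 : |t| ≤ y := by rw [abs_of_nonneg ht.1]; exact ht.2
      have hN0 : 0 ≤ N := le_trans (abs_nonneg _) (hd 0)
      calc |deriv f (x+t) - deriv f (x-t)| ≤ N * (2 * |t|) := this
        _ ≤ 2 * N * y := by nlinarith)
    (convex_Icc 0 y) (Set.left_mem_Icc.mpr hy) (Set.right_mem_Icc.mpr hy)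
  have h0 : h 0 = 2 * f x := by simp [hh]; ring
  have hyy : h y = f (x + y) + f (x - y) := rfl
  rw [Real.norm_eq_abs, Real.norm_eq_abs, h0, hyy, sub_zero, abs_of_nonneg hy] at key
  calc |f (x+y) + f (x-y) - 2 * f x| ≤ 2 * N * y * y := key
    _ = 2 * N * y ^ 2 := by ring

-- pointwise identity and bounds
section core
variable {γ N a : ℝ} {u v : ℝ → ℝ}

private lemma kabs (y : ℝ) (hy : 0 < y) (U V : ℝ) :
    |y / (y^2 + U^2) - y / (y^2 + V^2)|
      = y * |V - U| * |V + U| / ((y^2 + U^2) * (y^2 + V^2)) := by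
  have hU : (0:ℝ) < y^2 + U^2 := by positivity
  have hV : (0:ℝ) < y^2 + V^2 := by positivity
  have hid : y / (y^2 + U^2) - y / (y^2 + V^2)
      = y * (V - U) * (V + U) / ((y^2 + U^2) * (y^2 + V^2)) := by
    field_simp
    ring
  rw [hid, abs_div, abs_of_pos (mul_pos hU hV), abs_mul, abs_mul, abs_of_pos hy]

-- E1 : small scale bound
private lemma E1 (hN : 0 ≤ N) (ha : 0 ≤ a) {y : ℝ} (hy : 0 < y)
    {U V : ℝ} (h1 : |U - V| ≤ 2*N*y) (h2 : |U + V - 4*a| ≤ 2*N*y^2)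
    (h3u : a ≤ |U|) (h3v : a ≤ |V|) :
    |y / (y^2 + U^2) - y / (y^2 + V^2)|
      ≤ 8*N*a*y^2 / (y^2 + a^2)^2 + 4*N^2 := by
  have hU : (0:ℝ) < y^2 + U^2 := by positivity
  have hV : (0:ℝ) < y^2 + V^2 := by positivity
  have hden : (0:ℝ) < (y^2 + a^2)^2 := by positivity
  have hU2 : y^2 + a^2 ≤ y^2 + U^2 := by nlinarith [sq_abs U]
  have hV2 : y^2 + a^2 ≤ y^2 + V^2 := by nlinarith [sq_abs V]
  have hVU : |V - U| ≤ 2*N*y := by rw [abs_sub_comm]; exact h1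
  have hVpU : |V + U| ≤ 4*a + 2*N*y^2 := by
    have := abs_sub_abs_le_abs_sub (U + V) (4*a)
    rw [abs_of_nonneg (by linarith : (0:ℝ) ≤ 4*a)] at this
    have : |U + V| ≤ 4*a + 2*N*y^2 := by linarith [h2]
    rwa [add_comm V U]
  rw [kabs y hy U V]
  have hnum : y * |V - U| * |V + U| ≤ y * (2*N*y) * (4*a + 2*N*y^2) := by
    have := abs_nonneg (V - U)
    have := abs_nonneg (V + U)
    apply mul_le_mul
    · apply mul_le_mul_of_nonneg_left hVU hy.le
    · exact hVpU
    · exact abs_nonneg _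
    · positivity
  have hdd : (y^2 + a^2)^2 ≤ (y^2 + U^2) * (y^2 + V^2) := by nlinarith
  calc y * |V - U| * |V + U| / ((y^2 + U^2) * (y^2 + V^2))
      ≤ (y * (2*N*y) * (4*a + 2*N*y^2)) / (y^2 + a^2)^2 := by
        apply div_le_div₀ (by positivity) hnum hden hdd
    _ = 8*N*a*y^2 / (y^2+a^2)^2 + 4*N^2*y^4 / (y^2+a^2)^2 := by
        field_simp; ring
    _ ≤ 8*N*a*y^2 / (y^2+a^2)^2 + 4*N^2 := by
        have h4 : y^4 ≤ (y^2 + a^2)^2 := by nlinarith [sq_nonneg a, sq_nonneg y]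
        have : 4*N^2*y^4 / (y^2+a^2)^2 ≤ 4*N^2 := by
          rw [div_le_iff₀ hden]; nlinarith [sq_nonneg N]
        linarith

-- E0 : trivial bound
private lemma E0 {y : ℝ} (hy : 0 < y) (U V : ℝ) :
    |y / (y^2 + U^2) - y / (y^2 + V^2)| ≤ 2 / y := by
  have hU : (0:ℝ) < y^2 + U^2 := by positivity
  have hV : (0:ℝ) < y^2 + V^2 := by positivity
  have b : ∀ W : ℝ, y / (y^2 + W^2) ≤ 1 / y := by
    intro W
    rw [div_le_div_iff₀ (by positivity) hy]
    nlinarith [sq_nonneg W]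
  have b0 : ∀ W : ℝ, 0 ≤ y / (y^2 + W^2) := fun W => by positivity
  have := abs_sub (y / (y^2+U^2)) (y / (y^2+V^2))
  calc |y / (y^2 + U^2) - y / (y^2 + V^2)|
      ≤ |y / (y^2 + U^2)| + |y / (y^2 + V^2)| := abs_sub _ _
    _ ≤ 1/y + 1/y := by
        rw [abs_of_nonneg (b0 U), abs_of_nonneg (b0 V)]; exact add_le_add (b U) (b V)
    _ = 2 / y := by ring

-- E2 : tail bound
private lemma E2 (hN : 0 ≤ N) {y : ℝ} (hy : 1 ≤ y)
    {U V : ℝ} (h4 : |U - V| ≤ 2*N*y^(1-γ)) :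
    |y / (y^2 + U^2) - y / (y^2 + V^2)| ≤ 2*N*y^(-1-γ) := by
  have hy0 : (0:ℝ) < y := lt_of_lt_of_le one_pos hy
  have hU : (0:ℝ) < y^2 + U^2 := by positivity
  have hV : (0:ℝ) < y^2 + V^2 := by positivity
  rw [kabs y hy0 U V]
  have hVU : |V - U| ≤ 2*N*y^(1-γ) := by rw [abs_sub_comm]; exact h4
  have hVpU : |V + U| ≤ |U| + |V| := by rw [add_comm]; exact abs_add_le _ _
  have hu2 : 2*y*|U| ≤ y^2 + U^2 := by nlinarith [sq_abs U, sq_nonneg (y - |U|)]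
  have hv2 : 2*y*|V| ≤ y^2 + V^2 := by nlinarith [sq_abs V, sq_nonneg (y - |V|)]
  have hUge : y^2 ≤ y^2 + U^2 := by nlinarith [sq_nonneg U]
  have hVge : y^2 ≤ y^2 + V^2 := by nlinarith [sq_nonneg V]
  have t1 : (2*y*|U|) * y^2 ≤ (y^2+U^2) * (y^2+V^2) :=
    mul_le_mul hu2 hVge (by positivity) hU.le
  have t2 : y^2 * (2*y*|V|) ≤ (y^2+U^2) * (y^2+V^2) :=
    mul_le_mul hUge hv2 (by positivity) (by linarith)
  have hkey : y^3 * (|U| + |V|) ≤ (y^2+U^2) * (y^2+V^2) := by nlinarith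
  have hr : (0:ℝ) ≤ y^(1-γ) := Real.rpow_nonneg hy0.le _
  have hr2 : (0:ℝ) ≤ y^(-1-γ) := Real.rpow_nonneg hy0.le _
  have hnum : y * |V - U| * |V + U| ≤ y * (2*N*y^(1-γ)) * (|U| + |V|) := by
    apply mul_le_mul
    · exact mul_le_mul_of_nonneg_left hVU hy0.le
    · exact hVpU
    · exact abs_nonneg _
    · positivity
  have hexp : y * y^(1-γ) = y^(-1-γ) * y^3 := by
    rw [show y^(3:ℕ) = y^((3:ℕ):ℝ) from (Real.rpow_natCast y 3).symm,
      ← Real.rpow_add hy0]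
    nth_rewrite 1 [show y = y^(1:ℝ) from (Real.rpow_one y).symm]
    rw [← Real.rpow_add hy0]
    congr 1
    push_cast
    ring
  calc y * |V - U| * |V + U| / ((y^2 + U^2) * (y^2 + V^2))
      ≤ y * (2*N*y^(1-γ)) * (|U| + |V|) / ((y^2 + U^2) * (y^2 + V^2)) := by
        exact div_le_div₀ (by positivity) hnum (mul_pos hU hV) le_rfl
    _ = (2*N*y^(-1-γ)) * (y^3 * (|U|+|V|)) / ((y^2 + U^2) * (y^2 + V^2)) := by
        rw [show y * (2*N*y^(1-γ)) * (|U| + |V|) = (2*N) * (y * y^(1-γ)) * (|U|+|V|) by ring,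
          hexp]; ring
    _ ≤ (2*N*y^(-1-γ)) * ((y^2+U^2) * (y^2+V^2)) / ((y^2 + U^2) * (y^2 + V^2)) := by
        exact div_le_div₀ (by positivity) (mul_le_mul_of_nonneg_left hkey (by positivity)) (mul_pos hU hV) le_rfl
    _ = 2*N*y^(-1-γ) := by field_simp
end core

-- integral of G1 = 8*N*a*y^2/(y^2+a^2)^2 over Ioc 0 1 is ≤ 16 N
private lemma intG1 {N a : ℝ} (hN : 0 ≤ N) (ha : 0 ≤ a) :
    IntegrableOn (fun y : ℝ => 8*N*a*y^2/(y^2+a^2)^2) (Ioc 0 1) volume ∧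
    ∫ y in Ioc (0:ℝ) 1, 8*N*a*y^2/(y^2+a^2)^2 ≤ 16*N := by
  rcases eq_or_lt_of_le ha with ha0 | hapos
  · constructor
    · apply (integrableOn_congr_fun (g := fun _ => (0:ℝ)) ?_ measurableSet_Ioc).mpr
        (Iff.mpr integrableOn_const_iff (Or.inr (by simp [Real.volume_Ioc])))
      intro y hy
      simp [← ha0]
    · have : ∀ y ∈ Ioc (0:ℝ) 1, 8*N*a*y^2/(y^2+a^2)^2 = 0 := by intro y hy; simp [← ha0]
      rw [setIntegral_congr_fun measurableSet_Ioc this]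
      simp
      positivity
  -- now a > 0
  have hc : Continuous (fun y : ℝ => 8*N*a*y^2/(y^2+a^2)^2) := by
    apply Continuous.div (by continuity) (by continuity)
    intro y; positivity
  have hint : IntegrableOn (fun y : ℝ => 8*N*a*y^2/(y^2+a^2)^2) (Ioc 0 1) volume :=
    hc.integrableOn_Ioc
  refine ⟨hint, ?_⟩
  rcases le_or_gt 1 a with ha1 | ha1
  · -- a ≥ 1 : pointwise bound 2N
    have hptw : ∀ y ∈ Ioc (0:ℝ) 1, 8*N*a*y^2/(y^2+a^2)^2 ≤ 2*N := by
      intro y hy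
      rw [div_le_iff₀ (by positivity)]
      have key : 8*a*y^2 ≤ 2*(y^2+a^2)^2 := by nlinarith [sq_nonneg (y^2-a^2), sq_nonneg y]
      nlinarith [mul_le_mul_of_nonneg_left key hN]
    calc ∫ y in Ioc (0:ℝ) 1, 8*N*a*y^2/(y^2+a^2)^2
        ≤ ∫ _y in Ioc (0:ℝ) 1, 2*N := by
          apply setIntegral_mono_on hint (Iff.mpr integrableOn_const_iff (Or.inr (by simp [Real.volume_Ioc])))
            measurableSet_Ioc hptw
      _ = 2*N := by simp [Real.volume_Ioc]
      _ ≤ 16*N := by linarith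
  · -- 0 < a < 1 : split at a
    have hsplit : Ioc (0:ℝ) 1 = Ioc 0 a ∪ Ioc a 1 := (Ioc_union_Ioc_eq_Ioc hapos.le ha1.le).symm
    have hi1 : IntegrableOn (fun y : ℝ => 8*N*a*y^2/(y^2+a^2)^2) (Ioc 0 a) volume :=
      hint.mono_set (by rw [hsplit]; exact subset_union_left)
    have hi2 : IntegrableOn (fun y : ℝ => 8*N*a*y^2/(y^2+a^2)^2) (Ioc a 1) volume :=
      hint.mono_set (by rw [hsplit]; exact subset_union_right)
    rw [hsplit, setIntegral_union (Ioc_disjoint_Ioc_of_le le_rfl) measurableSet_Ioc hi1 hi2]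
    have b1 : ∫ y in Ioc (0:ℝ) a, 8*N*a*y^2/(y^2+a^2)^2 ≤ 8*N := by
      have hptw : ∀ y ∈ Ioc (0:ℝ) a, 8*N*a*y^2/(y^2+a^2)^2 ≤ 8*N/a := by
        intro y hy
        rw [div_le_div_iff₀ (by positivity) hapos]
        have key : a^2*y^2 ≤ (y^2+a^2)^2 := by nlinarith [sq_nonneg (y^2-a^2), sq_nonneg (a*y)]
        nlinarith [mul_le_mul_of_nonneg_left key hN]
      calc ∫ y in Ioc (0:ℝ) a, 8*N*a*y^2/(y^2+a^2)^2
          ≤ ∫ _y in Ioc (0:ℝ) a, 8*N/a := by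
            apply setIntegral_mono_on hi1 (Iff.mpr integrableOn_const_iff (Or.inr (by simp [Real.volume_Ioc])))
              measurableSet_Ioc hptw
        _ = a * (8*N/a) := by
            rw [setIntegral_const, measureReal_def, Real.volume_Ioc, smul_eq_mul, sub_zero,
              ENNReal.toReal_ofReal hapos.le]
        _ = 8*N := by field_simp
    have b2 : ∫ y in Ioc a (1:ℝ), 8*N*a*y^2/(y^2+a^2)^2 ≤ 8*N := by
      have hgc : ContinuousOn (fun y : ℝ => 8*N*a/y^2) (Icc a 1) := by
        apply ContinuousOn.div continuousOn_const (continuousOn_pow 2)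
        intro y hy
        have : 0 < y := lt_of_lt_of_le hapos hy.1
        positivity
      have hgint : IntegrableOn (fun y : ℝ => 8*N*a/y^2) (Ioc a 1) volume :=
        (hgc.integrableOn_Icc).mono_set Ioc_subset_Icc_self
      have hptw : ∀ y ∈ Ioc a (1:ℝ), 8*N*a*y^2/(y^2+a^2)^2 ≤ 8*N*a/y^2 := by
        intro y hy
        have hy0 : 0 < y := lt_trans hapos hy.1
        rw [div_le_div_iff₀ (by positivity) (by positivity)]
        have key : y^2*y^2 ≤ (y^2+a^2)^2 := by nlinarith [sq_nonneg a, sq_nonneg y]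
        nlinarith [mul_le_mul_of_nonneg_left key (by positivity : (0:ℝ) ≤ 8*N*a)]
      have hval : ∫ y in Ioc a (1:ℝ), 8*N*a/y^2 = 8*N - 8*N*a := by
        rw [← intervalIntegral.integral_of_le ha1.le]
        have hF : ∀ y ∈ uIcc a (1:ℝ), HasDerivAt (fun t : ℝ => -(8*N*a)*t⁻¹) (8*N*a/y^2) y := by
          intro y hy
          rw [uIcc_of_le ha1.le] at hy
          have hy0 : y ≠ 0 := (lt_of_lt_of_le hapos hy.1).ne'
          have := (hasDerivAt_inv hy0).const_mul (-(8*N*a))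
          rw [show 8*N*a/y^2 = -(8*N*a) * -(y^2)⁻¹ by ring]
          exact this
        rw [intervalIntegral.integral_eq_sub_of_hasDerivAt hF
          ((hgc.mono (by rw [uIcc_of_le ha1.le] : uIcc a (1:ℝ) ⊆ Icc a 1)).intervalIntegrable)]
        field_simp
        ring
      have := (setIntegral_mono_on hi2 hgint measurableSet_Ioc hptw).trans_eq hval
      nlinarith [mul_nonneg hN ha]
    linarith

private lemma intG2 {N : ℝ} (hN : 0 ≤ N) :
    IntegrableOn (fun y : ℝ => min (4*N^2) (2/y)) (Ioc 0 1) volume ∧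
    ∫ y in Ioc (0:ℝ) 1, min (4*N^2) (2/y) ≤ 6*N := by
  have hmeas : Measurable (fun y : ℝ => min (4*N^2) (2/y)) :=
    measurable_const.min (measurable_const.div measurable_id)
  have hbd : ∀ y : ℝ, y ∈ Ioc (0:ℝ) 1 → ‖min (4*N^2) (2/y)‖ ≤ 4*N^2 := by
    intro y hy
    have hy0 : (0:ℝ) < y := hy.1
    rw [Real.norm_eq_abs, abs_of_nonneg (le_min (by positivity) (by positivity))]
    exact min_le_left _ _
  have hig2 : ∀ s : Set ℝ, s ⊆ Ioc 0 1 → MeasurableSet s →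
      IntegrableOn (fun y : ℝ => min (4*N^2) (2/y)) s volume := by
    intro s hs hsm
    apply Measure.integrableOn_of_bounded (M := 4*N^2)
      ((lt_of_le_of_lt (measure_mono hs)
        (by simp [Real.volume_Ioc] : volume (Ioc (0:ℝ) 1) < ⊤)).ne)
      hmeas.aestronglyMeasurable
    exact (ae_restrict_iff' hsm).mpr (ae_of_all _ (fun y hy => hbd y (hs hy)))
  have hint := hig2 _ (subset_refl _) measurableSet_Ioc
  refine ⟨hint, ?_⟩
  rcases le_or_gt N 1 with hN1 | hN1
  · calc ∫ y in Ioc (0:ℝ) 1, min (4*N^2) (2/y)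
        ≤ ∫ _y in Ioc (0:ℝ) 1, 4*N^2 := by
          apply setIntegral_mono_on hint
            (Iff.mpr integrableOn_const_iff (Or.inr (by simp [Real.volume_Ioc])))
            measurableSet_Ioc (fun y hy => min_le_left _ _)
      _ = 4*N^2 := by simp [Real.volume_Ioc]
      _ ≤ 6*N := by nlinarith
  · -- N > 1, split at N⁻¹
    have hNi : (0:ℝ) < N⁻¹ := by positivity
    have hNi1 : N⁻¹ ≤ 1 := by rw [inv_le_one_iff₀]; right; linarith
    have hsplit : Ioc (0:ℝ) 1 = Ioc 0 N⁻¹ ∪ Ioc N⁻¹ 1 :=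
      (Ioc_union_Ioc_eq_Ioc hNi.le hNi1).symm
    have hs1 : Ioc (0:ℝ) N⁻¹ ⊆ Ioc 0 1 := by rw [hsplit]; exact subset_union_left
    have hs2 : Ioc N⁻¹ (1:ℝ) ⊆ Ioc 0 1 := by rw [hsplit]; exact subset_union_right
    rw [hsplit, setIntegral_union (Ioc_disjoint_Ioc_of_le le_rfl) measurableSet_Ioc
      (hig2 _ hs1 measurableSet_Ioc) (hig2 _ hs2 measurableSet_Ioc)]
    have b1 : ∫ y in Ioc (0:ℝ) N⁻¹, min (4*N^2) (2/y) ≤ 4*N := by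
      calc ∫ y in Ioc (0:ℝ) N⁻¹, min (4*N^2) (2/y)
          ≤ ∫ _y in Ioc (0:ℝ) N⁻¹, 4*N^2 := by
            apply setIntegral_mono_on (hig2 _ hs1 measurableSet_Ioc)
              (Iff.mpr integrableOn_const_iff (Or.inr (by simp [Real.volume_Ioc])))
              measurableSet_Ioc (fun y hy => min_le_left _ _)
        _ = N⁻¹ * (4*N^2) := by
            rw [setIntegral_const, measureReal_def, Real.volume_Ioc, smul_eq_mul, sub_zero,
              ENNReal.toReal_ofReal hNi.le]
        _ = 4*N := by field_simp
    have b2 : ∫ y in Ioc N⁻¹ (1:ℝ), min (4*N^2) (2/y) ≤ 2*N := by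
      have hgc : ContinuousOn (fun y : ℝ => 2/y) (Icc N⁻¹ 1) := by
        apply ContinuousOn.div continuousOn_const continuousOn_id
        intro y hy
        exact (lt_of_lt_of_le hNi hy.1).ne'
      have hgint : IntegrableOn (fun y : ℝ => 2/y) (Ioc N⁻¹ 1) volume :=
        (hgc.integrableOn_Icc).mono_set Ioc_subset_Icc_self
      have hval : ∫ y in Ioc N⁻¹ (1:ℝ), 2/y = 2 * Real.log N := by
        rw [← intervalIntegral.integral_of_le hNi1]
        have : ∀ y : ℝ, 2/y = 2 * (1/y) := fun y => by ring
        simp_rw [this]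
        rw [intervalIntegral.integral_const_mul, integral_one_div (by
          rw [uIcc_of_le hNi1, mem_Icc]
          intro h0
          linarith [h0.1])]
        norm_num
      calc ∫ y in Ioc N⁻¹ (1:ℝ), min (4*N^2) (2/y)
          ≤ ∫ y in Ioc N⁻¹ (1:ℝ), 2/y :=
            setIntegral_mono_on (hig2 _ hs2 measurableSet_Ioc) hgint
              measurableSet_Ioc (fun y hy => min_le_right _ _)
        _ = 2 * Real.log N := hval
        _ ≤ 2*N := by nlinarith [Real.log_le_sub_one_of_pos (by linarith : (0:ℝ) < N)]
    linarith

private lemma core {γ N a : ℝ} (hγ0 : 0 < γ) (hN : 0 ≤ N) (ha : 0 ≤ a)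
    (u v : ℝ → ℝ) (hu : Continuous u) (hv : Continuous v)
    (H1 : ∀ y : ℝ, 0 ≤ y → |u y - v y| ≤ 2*N*y)
    (H2 : ∀ y : ℝ, 0 ≤ y → |u y + v y - 4*a| ≤ 2*N*y^2)
    (H3u : ∀ y : ℝ, a ≤ |u y|) (H3v : ∀ y : ℝ, a ≤ |v y|)
    (H4 : ∀ y : ℝ, 1 ≤ y → |u y - v y| ≤ 2*N*y^(1-γ))
    (S : Set ℝ) (hS : MeasurableSet S) (hSsub : S ⊆ Ici 0) :
    IntegrableOn (fun y => y/(y^2+(u y)^2) - y/(y^2+(v y)^2)) S volume ∧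
    |∫ y in S, (y/(y^2+(u y)^2) - y/(y^2+(v y)^2))| ≤ (30 + 2/γ)*N := by
  set K : ℝ → ℝ := fun y => y/(y^2+(u y)^2) - y/(y^2+(v y)^2) with hK
  have hKm : Measurable K := by
    apply Measurable.sub
    · exact measurable_id.div ((measurable_id.pow_const 2).add (hu.measurable.pow_const 2))
    · exact measurable_id.div ((measurable_id.pow_const 2).add (hv.measurable.pow_const 2))
  -- pointwise bound on (0,1]
  have EC : ∀ y ∈ Ioc (0:ℝ) 1, |K y| ≤ 8*N*a*y^2/(y^2+a^2)^2 + min (4*N^2) (2/y) := by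
    intro y hy
    have hy0 : (0:ℝ) < y := hy.1
    rcases le_total (4*N^2) (2/y) with h | h
    · rw [min_eq_left h]
      exact E1 hN ha hy0 (H1 y hy0.le) (H2 y hy0.le) (H3u y) (H3v y)
    · rw [min_eq_right h]
      have h0 := E0 hy0 (u y) (v y)
      have g1 : (0:ℝ) ≤ 8*N*a*y^2/(y^2+a^2)^2 := by positivity
      linarith
  have hG1 := intG1 hN ha
  have hG2 := intG2 hN
  have hGsum : IntegrableOn (fun y : ℝ => 8*N*a*y^2/(y^2+a^2)^2 + min (4*N^2) (2/y))
      (Ioc 0 1) volume := hG1.1.add hG2.1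
  have iK1 : IntegrableOn K (Ioc 0 1) volume := by
    apply Integrable.mono' hGsum hKm.aestronglyMeasurable
    exact (ae_restrict_iff' measurableSet_Ioc).mpr (ae_of_all _ (fun y hy => by
      rw [Real.norm_eq_abs]; exact EC y hy))
  have b1 : ∫ y in Ioc (0:ℝ) 1, |K y| ≤ 22*N := by
    calc ∫ y in Ioc (0:ℝ) 1, |K y|
        ≤ ∫ y in Ioc (0:ℝ) 1, (8*N*a*y^2/(y^2+a^2)^2 + min (4*N^2) (2/y)) :=
          setIntegral_mono_on iK1.abs hGsum measurableSet_Ioc EC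
      _ = (∫ y in Ioc (0:ℝ) 1, 8*N*a*y^2/(y^2+a^2)^2)
          + ∫ y in Ioc (0:ℝ) 1, min (4*N^2) (2/y) := integral_add hG1.1 hG2.1
      _ ≤ 16*N + 6*N := add_le_add hG1.2 hG2.2
      _ = 22*N := by ring
  -- tail
  have itail : IntegrableOn (fun y : ℝ => 2*N*(y^(-1-γ))) (Ioi 1) volume := by
    have := (integrableOn_Ioi_rpow_of_lt (show (-1-γ) < -1 by linarith) one_pos).const_mul (2*N)
    simpa [mul_assoc, IntegrableOn] using this
  have Etail : ∀ y ∈ Ioi (1:ℝ), |K y| ≤ 2*N*(y^(-1-γ)) := by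
    intro y hy
    exact E2 hN (le_of_lt hy) (H4 y (le_of_lt hy))
  have iK2 : IntegrableOn K (Ioi 1) volume := by
    apply Integrable.mono' itail hKm.aestronglyMeasurable
    exact (ae_restrict_iff' measurableSet_Ioi).mpr (ae_of_all _ (fun y hy => by
      rw [Real.norm_eq_abs]; exact Etail y hy))
  have hval : ∫ y in Ioi (1:ℝ), y^(-1-γ) = 1/γ := by
    rw [integral_Ioi_rpow_of_lt (by linarith) one_pos,
      show (-1 - γ + 1) = -γ by ring, Real.one_rpow, neg_div_neg_eq]
  have b2 : ∫ y in Ioi (1:ℝ), |K y| ≤ 2*N*(1/γ) := by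
    calc ∫ y in Ioi (1:ℝ), |K y|
        ≤ ∫ y in Ioi (1:ℝ), 2*N*(y^(-1-γ)) :=
          setIntegral_mono_on iK2.abs itail measurableSet_Ioi Etail
      _ = 2*N * ∫ y in Ioi (1:ℝ), y^(-1-γ) := by
          rw [← MeasureTheory.integral_const_mul]
      _ = 2*N*(1/γ) := by rw [hval]
  -- combine
  have hIoi : Ioc (0:ℝ) 1 ∪ Ioi 1 = Ioi 0 := Ioc_union_Ioi_eq_Ioi zero_le_one
  have iK : IntegrableOn K (Ioi 0) volume := by rw [← hIoi]; exact iK1.union iK2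
  have btot : ∫ y in Ioi (0:ℝ), |K y| ≤ 22*N + 2*N*(1/γ) := by
    rw [← hIoi, setIntegral_union (Ioc_disjoint_Ioi le_rfl) measurableSet_Ioi iK1.abs iK2.abs]
    linarith
  have iKS : IntegrableOn K S volume :=
    (Iff.mpr integrableOn_Ici_iff_integrableOn_Ioi iK).mono_set hSsub
  refine ⟨iKS, ?_⟩
  have hSae : S ≤ᶠ[ae volume] Ioi (0:ℝ) := by
    unfold Filter.EventuallyLE; rw [Filter.eventually_iff, mem_ae_iff]
    refine measure_mono_null ?_ (measure_singleton (0:ℝ))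
    intro y hy
    simp only [mem_compl_iff, mem_setOf_eq, le_Prop_eq, Classical.not_imp] at hy
    have h0y : (0:ℝ) ≤ y := hSsub hy.1
    have hn : ¬ ((0:ℝ) < y) := fun h => hy.2 (Set.mem_Ioi.mpr h)
    simp [Set.mem_singleton_iff, le_antisymm (not_lt.mp hn) h0y]
  have step1 : |∫ y in S, K y| ≤ ∫ y in S, |K y| := by
    have := norm_integral_le_integral_norm (μ := volume.restrict S) K
    simpa [Real.norm_eq_abs] using this
  have step2 : ∫ y in S, |K y| ≤ ∫ y in Ioi (0:ℝ), |K y| :=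
    setIntegral_mono_set iK.abs (ae_of_all _ (fun y => abs_nonneg _)) hSae
  have hexpand : (30 + 2/γ)*N = 30*N + 2*N*(1/γ) := by ring
  linarith
end MuskatAux

section MuskatMain
open Set

/-- The basic kernel cancellation bound (2.1): for `γ ∈ (0,1/2]` there is `C = C_γ` such that
for every nonnegative C² function `f` with `|f'| ≤ N`, `|f''| ≤ N` and
`|f(z)−f(w)| ≤ N|z−w|^{1−γ}` for `|z−w| ≥ 1`, every `x` and every measurable `S ⊆ [0,∞)`,
the symmetrized kernel `y ↦ φ(y)+φ(−y)` (with `φ(y) = y/(y²+(f(x)±f(x−y))²)`) is integrable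
on `S` and its integral is bounded by `C·N`, for both choices of sign. -/
theorem stmt_10 (γ : ℝ) (hγ0 : 0 < γ) (hγ1 : γ ≤ 1 / 2) :
    ∃ C : ℝ, 0 < C ∧
      ∀ (f : ℝ → ℝ) (N : ℝ) (x : ℝ) (S : Set ℝ),
        ContDiff ℝ 2 f → (∀ z, 0 ≤ f z) →
        MeasurableSet S → S ⊆ Set.Ici 0 →
        (∀ z, |deriv f z| ≤ N) → (∀ z, |deriv (deriv f) z| ≤ N) →
        (∀ z w : ℝ, 1 ≤ |z - w| → |f z - f w| ≤ N * |z - w| ^ (1 - γ)) →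
        (IntegrableOn (fun y =>
            y / (y ^ 2 + (f x + f (x - y)) ^ 2) +
              -y / ((-y) ^ 2 + (f x + f (x + y)) ^ 2)) S volume ∧
          |∫ y in S, (y / (y ^ 2 + (f x + f (x - y)) ^ 2) +
              -y / ((-y) ^ 2 + (f x + f (x + y)) ^ 2))| ≤ C * N) ∧
        (IntegrableOn (fun y =>
            y / (y ^ 2 + (f x - f (x - y)) ^ 2) +
              -y / ((-y) ^ 2 + (f x - f (x + y)) ^ 2)) S volume ∧
          |∫ y in S, (y / (y ^ 2 + (f x - f (x - y)) ^ 2) +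
              -y / ((-y) ^ 2 + (f x - f (x + y)) ^ 2))| ≤ C * N) := by
  refine ⟨30 + 2/γ, by nlinarith [div_pos two_pos hγ0], ?_⟩
  intro f N x S hf hfpos hS hSsub hd hdd hHol
  have hN : 0 ≤ N := le_trans (abs_nonneg _) (hd 0)
  have hfd : Differentiable ℝ f := hf.differentiable two_ne_zero
  have hfc : Continuous f := hfd.continuous
  -- common estimates
  have hdiff : ∀ y : ℝ, 0 ≤ y → |f (x - y) - f (x + y)| ≤ 2*N*y := by
    intro y hy
    have h := lip_aux hfd hd (x - y) (x + y)
    rw [show (x - y) - (x + y) = -(2*y) by ring, abs_neg,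
      abs_of_nonneg (by linarith : (0:ℝ) ≤ 2*y)] at h
    linarith
  have hdiff4 : ∀ y : ℝ, 1 ≤ y → |f (x - y) - f (x + y)| ≤ 2*N*y^(1-γ) := by
    intro y hy
    have hy0 : (0:ℝ) < y := lt_of_lt_of_le one_pos hy
    have habs : |(x - y) - (x + y)| = 2*y := by
      rw [show (x - y) - (x + y) = -(2*y) by ring, abs_neg,
        abs_of_nonneg (by linarith : (0:ℝ) ≤ 2*y)]
    have h := hHol (x - y) (x + y) (by rw [habs]; linarith)
    rw [habs] at h
    have hsplit : (2*y)^(1-γ) = 2^(1-γ) * y^(1-γ) :=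
      Real.mul_rpow (by norm_num) hy0.le
    have h2le : (2:ℝ)^(1-γ) ≤ 2 := by
      calc (2:ℝ)^(1-γ) ≤ 2^(1:ℝ) :=
            Real.rpow_le_rpow_of_exponent_le one_le_two (by linarith)
        _ = 2 := Real.rpow_one 2
    have hrn : (0:ℝ) ≤ y^(1-γ) := Real.rpow_nonneg hy0.le _
    calc |f (x - y) - f (x + y)| ≤ N * (2*y)^(1-γ) := h
      _ = N * 2^(1-γ) * y^(1-γ) := by rw [hsplit]; ring
      _ ≤ N * 2 * y^(1-γ) :=
          mul_le_mul_of_nonneg_right (mul_le_mul_of_nonneg_left h2le hN) hrn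
      _ = 2*N*y^(1-γ) := by ring
  have hsecond : ∀ y : ℝ, 0 ≤ y → |f (x + y) + f (x - y) - 2 * f x| ≤ 2*N*y^2 :=
    fun y hy => second_diff hf hd hdd x y hy
  constructor
  · -- plus case
    set u : ℝ → ℝ := fun y => f x + f (x - y) with hu'
    set v : ℝ → ℝ := fun y => f x + f (x + y) with hv'
    have hcu : Continuous u := continuous_const.add (hfc.comp (continuous_const.sub continuous_id))
    have hcv : Continuous v := continuous_const.add (hfc.comp (continuous_const.add continuous_id))
    have hres := core hγ0 hN (hfpos x) u v hcu hcv
      (fun y hy => by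
        have := hdiff y hy
        simpa [hu', hv', add_sub_add_left_eq_sub] using this)
      (fun y hy => by
        have h := hsecond y hy
        have heq : u y + v y - 4*(f x) = f (x + y) + f (x - y) - 2*f x := by
          simp [hu', hv']; ring
        rw [heq]; exact h)
      (fun y => by
        rw [abs_of_nonneg (add_nonneg (hfpos x) (hfpos (x - y)))]
        simp [hu']; linarith [hfpos (x - y)])
      (fun y => by
        rw [abs_of_nonneg (add_nonneg (hfpos x) (hfpos (x + y)))]
        simp [hv']; linarith [hfpos (x + y)])
      (fun y hy => by
        have := hdiff4 y hy
        simpa [hu', hv', add_sub_add_left_eq_sub] using this)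
      S hS hSsub
    have hfun : (fun y : ℝ => y / (y ^ 2 + (f x + f (x - y)) ^ 2) +
        -y / ((-y) ^ 2 + (f x + f (x + y)) ^ 2))
        = (fun y => y/(y^2+(u y)^2) - y/(y^2+(v y)^2)) := by
      funext y
      simp only [hu', hv']
      ring
    rw [hfun]
    exact hres
  · -- minus case
    set u : ℝ → ℝ := fun y => f x - f (x - y) with hu'
    set v : ℝ → ℝ := fun y => f x - f (x + y) with hv'
    have hcu : Continuous u := continuous_const.sub (hfc.comp (continuous_const.sub continuous_id))
    have hcv : Continuous v := continuous_const.sub (hfc.comp (continuous_const.add continuous_id))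
    have hres := core hγ0 hN le_rfl u v hcu hcv
      (fun y hy => by
        have h := hdiff y hy
        have heq : u y - v y = -(f (x - y) - f (x + y)) := by simp only [hu', hv']; ring
        rw [heq, abs_neg]; exact h)
      (fun y hy => by
        have h := hsecond y hy
        have heq : u y + v y - 4*0 = -(f (x + y) + f (x - y) - 2*f x) := by
          simp [hu', hv']; ring
        rw [heq, abs_neg]; exact h)
      (fun y => abs_nonneg _)
      (fun y => abs_nonneg _)
      (fun y hy => by
        have h := hdiff4 y hy
        have heq : u y - v y = -(f (x - y) - f (x + y)) := by simp only [hu', hv']; ring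
        rw [heq, abs_neg]; exact h)
      S hS hSsub
    have hfun : (fun y : ℝ => y / (y ^ 2 + (f x - f (x - y)) ^ 2) +
        -y / ((-y) ^ 2 + (f x - f (x + y)) ^ 2))
        = (fun y => y/(y^2+(u y)^2) - y/(y^2+(v y)^2)) := by
      funext y
      simp only [hu', hv']
      ring
    rw [hfun]
    exact hres
end MuskatMain
end

section
/- Let f : ℝ → ℝ be C² with f ≥ 0, ‖f'‖_∞ ≤ K and ‖f''‖_∞ ≤ K. Fix x ∈ ℝ with f(x) ≤ 1 and set a := f(x). Then for all y with |y| ≤ √a: |f(x+y) − f(x−y)| ≤ 4(1+K)·√a·|y|. -/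
lemma taylor_bound (f : ℝ → ℝ) (K : ℝ) (hf : ContDiff ℝ 2 f)
    (h2 : ∀ z, |deriv (deriv f) z| ≤ K) (x y : ℝ) :
    |f (x + y) - f x - deriv f x * y| ≤ K * y ^ 2 := by
  have hK : 0 ≤ K := le_trans (abs_nonneg _) (h2 0)
  have hdf : Differentiable ℝ f := hf.differentiable (by norm_num)
  have hdf1 : ContDiff ℝ 1 (deriv f) := by
    have := (contDiff_succ_iff_deriv (n := 1)).mp (by norm_num at hf ⊢; exact hf)
    exact this.2.2
  have hdf1' : Differentiable ℝ (deriv f) := hdf1.differentiable (by norm_num)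
  have hlip : LipschitzWith (Real.toNNReal K) (deriv f) := by
    apply lipschitzWith_of_nnnorm_deriv_le hdf1'
    intro z
    rw [← NNReal.coe_le_coe]
    simpa [Real.coe_toNNReal K hK] using h2 z
  have hconv : Convex ℝ (Set.uIcc x (x + y)) := convex_uIcc _ _
  have hgd : ∀ t ∈ Set.uIcc x (x + y),
      HasDerivWithinAt (fun t => f t - deriv f x * t) (deriv f t - deriv f x)
        (Set.uIcc x (x + y)) t := by
    intro t _
    have h := (hdf t).hasDerivAt.sub ((hasDerivAt_id t).const_mul (deriv f x))
    exact h.hasDerivWithinAt.congr_deriv (by simp)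
  have hbound : ∀ t ∈ Set.uIcc x (x + y), ‖deriv f t - deriv f x‖ ≤ K * |y| := by
    intro t ht
    have hd : dist (deriv f t) (deriv f x) ≤ K * dist t x := by
      simpa [Real.coe_toNNReal K hK] using hlip.dist_le_mul t x
    have hd2 : |t - x| ≤ |y| := by
      have := Set.abs_sub_left_of_mem_uIcc ht
      simpa using this
    have : dist t x ≤ |y| := by rwa [Real.dist_eq]
    calc ‖deriv f t - deriv f x‖ = dist (deriv f t) (deriv f x) := rfl
      _ ≤ K * dist t x := hd
      _ ≤ K * |y| := by nlinarith [dist_nonneg (x := t) (y := x)]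
  have key := hconv.norm_image_sub_le_of_norm_hasDerivWithin_le hgd hbound
      (Set.left_mem_uIcc) (Set.right_mem_uIcc)
  have heq : (f (x + y) - deriv f x * (x + y)) - (f x - deriv f x * x)
      = f (x + y) - f x - deriv f x * y := by ring
  rw [heq] at key
  have hnorm : ‖(x + y) - x‖ = |y| := by simp
  rw [hnorm] at key
  calc |f (x + y) - f x - deriv f x * y| ≤ K * |y| * |y| := key
    _ = K * y ^ 2 := by rw [mul_assoc, ← abs_mul, ← sq, abs_sq]

/-- The symmetric difference bound from Section 3: if `f` is C², nonnegative, with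
`|f'| ≤ K`, `|f''| ≤ K`, and `f(x) ≤ 1`, then for all `|y| ≤ √(f x)`,
`|f(x+y) − f(x−y)| ≤ 4(1+K)·√(f x)·|y|`. -/
theorem stmt_12 (f : ℝ → ℝ) (K : ℝ) (hf : ContDiff ℝ 2 f) (hpos : ∀ z, 0 ≤ f z)
    (h1 : ∀ z, |deriv f z| ≤ K) (h2 : ∀ z, |deriv (deriv f) z| ≤ K)
    (x : ℝ) (hfx : f x ≤ 1) :
    ∀ y : ℝ, |y| ≤ Real.sqrt (f x) →
      |f (x + y) - f (x - y)| ≤ 4 * (1 + K) * Real.sqrt (f x) * |y| := by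
  intro y hy
  have hK : 0 ≤ K := le_trans (abs_nonneg _) (h2 0)
  set a := f x with ha
  set b := deriv f x with hb
  set s := Real.sqrt a with hsq
  have hs0 : 0 ≤ s := Real.sqrt_nonneg _
  have hs2 : s ^ 2 = a := Real.sq_sqrt (hpos x)
  have hbsq : b ^ 2 ≤ 4 * K * a := by
    rcases eq_or_lt_of_le hK with hK0 | hK0
    · have hb1 := h1 x
      rw [← hK0] at hb1
      have hb0 : b = 0 := abs_nonpos_iff.mp (by simpa using hb1)
      rw [hb0]
      have := hpos x
      nlinarith
    · set y₀ := -b / (2 * K) with hy₀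
      have ht := taylor_bound f K hf h2 x y₀
      have hnn := hpos (x + y₀)
      have h' : f (x + y₀) - a - b * y₀ ≤ K * y₀ ^ 2 := (abs_le.mp ht).2
      have hthis : 0 ≤ a + b * y₀ + K * y₀ ^ 2 := by linarith
      have hu : 2 * K * y₀ = -b := by rw [hy₀]; field_simp
      nlinarith [mul_nonneg hK0.le hthis, hu, sq_nonneg y₀]
  set q := Real.sqrt K with hq
  have hq2 : q ^ 2 = K := Real.sq_sqrt hK
  have hq0 : 0 ≤ q := Real.sqrt_nonneg _
  have habs : |b| ≤ 2 * q * s := by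
    have h4 : b ^ 2 ≤ (2 * q * s) ^ 2 := by nlinarith
    rw [← Real.sqrt_sq_eq_abs]
    calc Real.sqrt (b ^ 2) ≤ Real.sqrt ((2 * q * s) ^ 2) := Real.sqrt_le_sqrt h4
      _ = 2 * q * s := Real.sqrt_sq (by positivity)
  have t1 := taylor_bound f K hf h2 x y
  have t2 := taylor_bound f K hf h2 x (-y)
  have hxy : x + -y = x - y := by ring
  rw [hxy] at t2
  have key : |f (x + y) - f (x - y)| ≤ 2 * |b| * |y| + 2 * K * y ^ 2 := by
    have e : f (x + y) - f (x - y) =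
        (f (x + y) - a - b * y) - (f (x - y) - a - b * (-y)) + 2 * (b * y) := by ring
    rw [e]
    have habsy : |2 * (b * y)| = 2 * (|b| * |y|) := by
      rw [abs_mul, abs_mul]; simp
    calc |(f (x + y) - a - b * y) - (f (x - y) - a - b * (-y)) + 2 * (b * y)|
        ≤ |(f (x + y) - a - b * y) - (f (x - y) - a - b * (-y))| + |2 * (b * y)| :=
          abs_add_le _ _
      _ ≤ |f (x + y) - a - b * y| + |f (x - y) - a - b * (-y)| + |2 * (b * y)| := by
          linarith [abs_sub (f (x + y) - a - b * y) (f (x - y) - a - b * (-y))]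
      _ ≤ K * y ^ 2 + K * (-y) ^ 2 + 2 * (|b| * |y|) := by
          rw [habsy]
          exact add_le_add (add_le_add t1 t2) (le_refl _)
      _ = 2 * |b| * |y| + 2 * K * y ^ 2 := by ring
  have hy2 : y ^ 2 = |y| ^ 2 := (sq_abs y).symm
  have hyn : 0 ≤ |y| := abs_nonneg y
  have hqle : 2 * q ≤ 1 + K := by nlinarith [sq_nonneg (q - 1)]
  calc |f (x + y) - f (x - y)| ≤ 2 * |b| * |y| + 2 * K * y ^ 2 := key
    _ ≤ 2 * (2 * q * s) * |y| + 2 * K * (s * |y|) := by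
        rw [hy2]
        nlinarith [mul_le_mul_of_nonneg_right habs hyn,
          mul_nonneg hK (sub_nonneg.mpr (mul_le_mul_of_nonneg_right hy hyn))]
    _ ≤ 4 * (1 + K) * s * |y| := by
        nlinarith [mul_le_mul_of_nonneg_right (mul_le_mul_of_nonneg_right hqle hs0) hyn,
          mul_nonneg (mul_nonneg hK hs0) hyn]
end

section
/- Let f : ℝ → ℝ be C³ with f ≥ 0 and ‖f''‖_∞ =: K < ∞. Fix x and let M_f(x) := sup_{y>0} (1/(2y)) ∫_{−y}^y |f'''(x+z)| dz. Then f'(x)² ≤ 4·(|f'(x)| + |f''(x)| + M_f(x))·f(x); equivalently, with a = f(x), b = f'(x), c = f''(x): b² ≤ 4(|b| + |c| + M_f(x))·a. -/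
open intervalIntegral

/-- The auxiliary inequality from the proof of Lemma 2.3: for a nonnegative C³ function `f`
with bounded second derivative, with `a = f(x)`, `b = f'(x)`, `c = f''(x)` and `M` any upper
bound for the maximal function of `f'''` at `x`, one has `b² ≤ 4(|b| + |c| + M)·a`. -/
theorem stmt_14 (f : ℝ → ℝ) (K : ℝ) (hf : ContDiff ℝ 3 f) (hpos : ∀ z, 0 ≤ f z)
    (hK : ∀ z, |deriv (deriv f) z| ≤ K) (x : ℝ) (M : ℝ) (hM : 0 ≤ M)
    (hMave : ∀ t : ℝ, 0 < t →
      1 / (2 * t) * ∫ z in (-t)..t, |deriv (deriv (deriv f)) (x + z)| ≤ M) :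
    deriv f x ^ 2 ≤ 4 * (|deriv f x| + |deriv (deriv f) x| + M) * f x := by
  -- smoothness facts
  have hfd : Differentiable ℝ f := hf.differentiable (by norm_num)
  have hf2 : ContDiff ℝ 2 (deriv f) :=
    ((contDiff_succ_iff_deriv (n := 2)).mp (by exact_mod_cast hf)).2.2
  have hgd : Differentiable ℝ (deriv f) := hf2.differentiable (by norm_num)
  have hf1 : ContDiff ℝ 1 (deriv (deriv f)) :=
    ((contDiff_succ_iff_deriv (n := 1)).mp (by exact_mod_cast hf2)).2.2
  have hhd : Differentiable ℝ (deriv (deriv f)) := hf1.differentiable (by norm_num)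
  have hcont3 : Continuous (deriv (deriv (deriv f))) :=
    (((contDiff_succ_iff_deriv (n := 0)).mp (by exact_mod_cast hf1)).2.2).continuous
  set a := f x with ha_def
  set b := deriv f x with hb_def
  set c := deriv (deriv f) x with hc_def
  have ha0 : 0 ≤ a := hpos x
  rcases le_or_gt |b| (4 * a) with hle | hba
  · -- easy case
    have h1 : |b| * |b| ≤ (4 * a) * |b| := mul_le_mul_of_nonneg_right hle (abs_nonneg b)
    have h2 : b ^ 2 = |b| * |b| := by rw [← sq_abs]; ring
    have h3 : 4 * (|b| + |c| + M) * a = 4 * a * |b| + 4 * (a * |c|) + 4 * (a * M) := by ring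
    linarith [h2.le, mul_nonneg ha0 (abs_nonneg c), mul_nonneg ha0 hM]
  · rcases eq_or_lt_of_le ha0 with ha | ha
    · -- f x = 0 forces deriv f x = 0
      have hmin : IsLocalMin f x :=
        Filter.Eventually.of_forall fun y => by rw [← ha_def, ← ha]; exact hpos y
      have hb0 : b = 0 := hmin.deriv_eq_zero
      rw [hb0, ← ha]
      simp
    -- main case : 0 < a, 4a < |b|
    have hb0 : 0 < |b| := lt_of_le_of_lt (by linarith) hba
    set t := 2 * a / |b| with ht_def
    have ht : 0 < t := by positivity
    have htb : t * |b| = 2 * a := div_mul_cancel₀ _ hb0.ne'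
    have h2t : 2 * t ≤ 1 := by
      have h4 : 4 * a / |b| ≤ 1 := (div_le_one hb0).mpr hba.le
      calc 2 * t = 4 * a / |b| := by rw [ht_def]; ring
        _ ≤ 1 := h4
    -- bound on the averaged third derivative
    set I := ∫ z in (-t)..t, |deriv (deriv (deriv f)) (x + z)| with hI_def
    have hI : I ≤ M * (2 * t) := by
      have h := hMave t ht
      rw [← hI_def, one_div_mul_eq_div] at h
      exact (div_le_iff₀ (by positivity)).mp h
    have hIeq : (∫ u in (x - t)..(x + t), |deriv (deriv (deriv f)) u|) = I := by
      rw [hI_def]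
      rw [intervalIntegral.integral_comp_add_left (fun u => |deriv (deriv (deriv f)) u|) x]
      congr 1 <;> ring_nf
    have hint3 : IntervalIntegrable (fun u => |deriv (deriv (deriv f)) u|)
        MeasureTheory.volume (x - t) (x + t) := (hcont3.abs).intervalIntegrable _ _
    set CC := |c| + M * (2 * t) with hCC_def
    have hCC0 : 0 ≤ CC := by positivity
    -- bound |f''| on Icc (x-t) (x+t)
    have hC2 : ∀ s ∈ Set.Icc (x - t) (x + t), |deriv (deriv f) s| ≤ CC := by
      intro s hs
      have hftc : ∫ u in x..s, deriv (deriv (deriv f)) u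
          = deriv (deriv f) s - deriv (deriv f) x :=
        intervalIntegral.integral_eq_sub_of_hasDerivAt
          (fun u _ => (hhd u).hasDerivAt) (hcont3.intervalIntegrable x s)
      have h1 : |deriv (deriv f) s - c| ≤ ∫ u in (x - t)..(x + t),
          |deriv (deriv (deriv f)) u| := by
        rw [hc_def, ← hftc]
        rcases le_total x s with hxs | hxs
        · calc |∫ u in x..s, deriv (deriv (deriv f)) u|
              ≤ ∫ u in x..s, |deriv (deriv (deriv f)) u| :=
                intervalIntegral.abs_integral_le_integral_abs hxs
            _ ≤ ∫ u in (x - t)..(x + t), |deriv (deriv (deriv f)) u| :=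
                intervalIntegral.integral_mono_interval (by linarith) hxs hs.2
                  (Filter.Eventually.of_forall fun _ => abs_nonneg _) hint3
        · rw [intervalIntegral.integral_symm, abs_neg]
          calc |∫ u in s..x, deriv (deriv (deriv f)) u|
              ≤ ∫ u in s..x, |deriv (deriv (deriv f)) u| :=
                intervalIntegral.abs_integral_le_integral_abs hxs
            _ ≤ ∫ u in (x - t)..(x + t), |deriv (deriv (deriv f)) u| :=
                intervalIntegral.integral_mono_interval hs.1 hxs (by linarith)
                  (Filter.Eventually.of_forall fun _ => abs_nonneg _) hint3
      rw [hIeq] at h1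
      have h2 : |deriv (deriv f) s| ≤ |deriv (deriv f) s - c| + |c| := by
        calc |deriv (deriv f) s| = |(deriv (deriv f) s - c) + c| := by ring_nf
          _ ≤ |deriv (deriv f) s - c| + |c| := abs_add_le _ _
      rw [hCC_def]; linarith
    have hxmem : x ∈ Set.Icc (x - t) (x + t) := ⟨by linarith, by linarith⟩
    -- Lipschitz bound on deriv f
    have hLip : ∀ s ∈ Set.Icc (x - t) (x + t), |deriv f s - b| ≤ CC * t := by
      intro s hs
      have h1 := Convex.norm_image_sub_le_of_norm_deriv_le (f := deriv f)
        (fun u _ => hgd u) hC2 (convex_Icc _ _) hxmem hs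
      have h2 : |s - x| ≤ t := abs_le.mpr ⟨by linarith [hs.1], by linarith [hs.2]⟩
      calc |deriv f s - b| ≤ CC * |s - x| := h1
        _ ≤ CC * t := mul_le_mul_of_nonneg_left h2 hCC0
    -- the sign
    set σ : ℝ := if 0 ≤ b then 1 else -1 with hσ_def
    have hσb : σ * b = |b| := by
      rw [hσ_def]
      split_ifs with h
      · rw [abs_of_nonneg h]; ring
      · rw [abs_of_neg (lt_of_not_ge h)]; ring
    have hσ1 : |σ| = 1 := by
      rw [hσ_def]; split_ifs <;> simp
    -- FTC for u ↦ f (x - σ u)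
    have hder : ∀ u ∈ Set.uIcc (0 : ℝ) t,
        HasDerivAt (fun u => f (x - σ * u)) (-(σ * deriv f (x - σ * u))) u := by
      intro u _
      have h1 : HasDerivAt (fun u : ℝ => x - σ * u) (-σ) u := by
        simpa using ((hasDerivAt_id u).const_mul σ).const_sub x
      have h2 : HasDerivAt f (deriv f (x - σ * u)) (x - σ * u) := (hfd _).hasDerivAt
      have h3 := h2.comp u h1
      have heq : deriv f (x - σ * u) * -σ = -(σ * deriv f (x - σ * u)) := by ring
      rw [heq] at h3
      exact h3
    have hgcont : Continuous (deriv f) := hf2.continuous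
    have hintg : IntervalIntegrable (fun u => -(σ * deriv f (x - σ * u)))
        MeasureTheory.volume 0 t := by
      apply Continuous.intervalIntegrable
      fun_prop
    have hFTC : ∫ u in (0 : ℝ)..t, -(σ * deriv f (x - σ * u))
        = f (x - σ * t) - f x :=  by
      have := intervalIntegral.integral_eq_sub_of_hasDerivAt hder hintg
      simpa using this
    -- pointwise bound of the integrand
    have hmono : ∫ u in (0 : ℝ)..t, -(σ * deriv f (x - σ * u))
        ≤ ∫ _u in (0 : ℝ)..t, (-|b| + CC * t) := by
      apply intervalIntegral.integral_mono_on ht.le hintg intervalIntegrable_const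
      intro u hu
      have habs : |σ * u| ≤ t := by
        rw [abs_mul, hσ1, one_mul, abs_of_nonneg hu.1]; exact hu.2
      have habs' := abs_le.mp habs
      have hp : x - σ * u ∈ Set.Icc (x - t) (x + t) :=
        ⟨by linarith [habs'.2], by linarith [habs'.1]⟩
      have h3 := hLip _ hp
      have h4 : -(σ * deriv f (x - σ * u))
          = -(σ * (deriv f (x - σ * u) - b)) - |b| := by rw [← hσb]; ring
      have h5 : -(σ * (deriv f (x - σ * u) - b)) ≤ |σ * (deriv f (x - σ * u) - b)| :=
        neg_le_abs _
      have h6 : |σ * (deriv f (x - σ * u) - b)| = |deriv f (x - σ * u) - b| := by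
        rw [abs_mul, hσ1, one_mul]
      rw [h4]
      linarith
    have hconst : ∫ _u in (0 : ℝ)..t, (-|b| + CC * t) = t * (-|b| + CC * t) := by
      rw [intervalIntegral.integral_const, sub_zero, smul_eq_mul]
    have hnn : 0 ≤ f (x - σ * t) := hpos _
    -- combine : a ≤ CC * t^2
    have key : a ≤ CC * t ^ 2 := by
      have h7 : f (x - σ * t) - f x ≤ t * (-|b| + CC * t) := by
        rw [← hFTC, ← hconst]; exact hmono
      have e : t * (-|b| + CC * t) = -(t * |b|) + CC * t ^ 2 := by ring
      rw [e, htb, ← ha_def] at h7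
      linarith
    -- final arithmetic
    have ht2 : t ^ 2 * |b| ^ 2 = 4 * a ^ 2 := by
      calc t ^ 2 * |b| ^ 2 = (t * |b|) ^ 2 := by ring
        _ = (2 * a) ^ 2 := by rw [htb]
        _ = 4 * a ^ 2 := by ring
    have hMle : M * (2 * t) ≤ M := by
      calc M * (2 * t) ≤ M * 1 := mul_le_mul_of_nonneg_left h2t hM
        _ = M := mul_one M
    have k2 : a ≤ (|c| + M) * t ^ 2 :=
      le_trans key (mul_le_mul_of_nonneg_right (by rw [hCC_def]; linarith) (sq_nonneg t))
    have step1 : a * |b| ^ 2 ≤ (|c| + M) * (4 * a ^ 2) := by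
      calc a * |b| ^ 2 ≤ ((|c| + M) * t ^ 2) * |b| ^ 2 :=
            mul_le_mul_of_nonneg_right k2 (sq_nonneg _)
        _ = (|c| + M) * (t ^ 2 * |b| ^ 2) := by ring
        _ = (|c| + M) * (4 * a ^ 2) := by rw [ht2]
    have step2 : a * (|b| ^ 2) ≤ a * (4 * (|c| + M) * a) := by
      calc a * (|b| ^ 2) ≤ (|c| + M) * (4 * a ^ 2) := step1
        _ = a * (4 * (|c| + M) * a) := by ring
    have hfin : |b| ^ 2 ≤ 4 * (|c| + M) * a := le_of_mul_le_mul_left step2 ha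
    have h9 : 4 * (|c| + M) * a + 4 * (|b| * a) = 4 * (|b| + |c| + M) * a := by ring
    have h10 : 0 ≤ |b| * a := mul_nonneg (abs_nonneg b) ha.le
    calc b ^ 2 = |b| ^ 2 := (sq_abs b).symm
      _ ≤ 4 * (|c| + M) * a := hfin
      _ ≤ 4 * (|b| + |c| + M) * a := by linarith
end

section
/- For μ ≥ 0 define the weighted local norm ‖g‖_{L̃^{2,μ}} := sup_{x₀∈ℝ} ‖√(1+(μ−|x|)₊)·g(x)‖_{L²([x₀−1,x₀+1])}, and let A := sup_{x₀∈ℝ} (1+(μ−|x₀|)₊)·‖g‖²_{L²([x₀−1,x₀+1])}. Prove that for every x₀ ∈ ℝ, ∫_ℝ g(x)² · min{1, |x−x₀|^{−2}} dx ≤ C·A/(1+(μ−|x₀|)₊) for a universal constant C. -/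
open MeasureTheory Finset

private noncomputable def bphi (k : ℕ) : ℝ := ((max k 1 : ℕ) : ℝ)⁻¹ ^ 2

private lemma bphi_nonneg (k : ℕ) : 0 ≤ bphi k := by unfold bphi; positivity

private lemma bphi_zero : bphi 0 = 1 := by norm_num [bphi]

private lemma bphi_of_pos {k : ℕ} (hk : 1 ≤ k) : bphi k = ((k : ℝ))⁻¹ ^ 2 := by
  unfold bphi; rw [max_eq_left hk]

/-- tail telescoping bound -/
private lemma sumB (N : ℕ) (hN : 1 ≤ N) (K : ℕ) :
    ∑ i ∈ range K, bphi (i + N) ≤ 2 / N - 2 / (K + N) := by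
  induction K with
  | zero => simp
  | succ K ih =>
    rw [Finset.sum_range_succ]
    have h1' : (1 : ℝ) ≤ (K : ℝ) + N := by
      have h2 : (1:ℝ) ≤ (N:ℝ) := by exact_mod_cast hN
      have h3 : (0:ℝ) ≤ (K:ℝ) := Nat.cast_nonneg K
      linarith
    have hb : bphi (K + N) = ((K : ℝ) + N)⁻¹ ^ 2 := by
      rw [bphi_of_pos (le_trans hN (Nat.le_add_left N K))]
      push_cast; ring
    have key : ((K : ℝ) + N)⁻¹ ^ 2 ≤ 2 / ((K:ℝ) + N) - 2 / (((K:ℝ)+1) + N) := by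
      have ha : (0:ℝ) < (K:ℝ) + N := by linarith
      have ha1 : (0:ℝ) < (K:ℝ) + N + 1 := by linarith
      rw [inv_pow, inv_le_iff_one_le_mul₀ (by positivity)]
      have : 2 / ((K:ℝ) + N) - 2 / (((K:ℝ)+1) + N) = 2 / (((K:ℝ)+N) * ((K:ℝ)+N+1)) := by
        field_simp; ring
      rw [this]
      rw [div_mul_eq_mul_div, le_div_iff₀ (by positivity)]
      nlinarith
    rw [hb]
    push_cast
    linarith [key, ih]

private lemma sumA (N : ℕ) : ∑ i ∈ range N, bphi i ≤ 3 := by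
  cases N with
  | zero => simp
  | succ K =>
    rw [Finset.sum_range_succ']
    have := sumB 1 le_rfl K
    have h2 : (0:ℝ) ≤ 2 / ((K:ℝ) + 1) := by positivity
    rw [bphi_zero]
    push_cast at this ⊢
    linarith

private lemma weight_lb (μ x₀ c : ℝ) :
    max 1 ((1 + max (μ - |x₀|) 0) - |c - x₀|) ≤ 1 + max (μ - |c|) 0 := by
  have hd : |c| - |x₀| ≤ |c - x₀| := abs_sub_abs_le_abs_sub c x₀
  have hd0 : (0:ℝ) ≤ |c - x₀| := abs_nonneg _
  apply max_le
  · have : (0:ℝ) ≤ max (μ - |c|) 0 := le_max_right _ _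
    linarith
  · have h1 : μ - |x₀| ≤ max (μ - |c|) 0 + |c - x₀| := by
      have : μ - |x₀| ≤ (μ - |c|) + |c - x₀| := by linarith
      exact this.trans (by gcongr; exact le_max_left _ _)
    have h2 : max (μ - |x₀|) 0 ≤ max (μ - |c|) 0 + |c - x₀| := by
      apply max_le h1
      positivity
    linarith

private lemma piece (μ A x₀ : ℝ) (g : ℝ → ℝ) (hg : Measurable g)
    (hInt : ∀ y : ℝ, IntegrableOn (fun x => g x ^ 2) (Set.Icc (y - 1) (y + 1)) volume)
    (hA : ∀ y : ℝ,
      (1 + max (μ - |y|) 0) * ∫ x in Set.Icc (y - 1) (y + 1), g x ^ 2 ≤ A)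
    (a β : ℝ) (hβ0 : 0 ≤ β)
    (hβ : ∀ x ∈ Set.Icc a (a + 1), min 1 (|x - x₀|⁻¹ ^ 2) ≤ β) :
    ∫⁻ x in Set.Icc a (a + 1), ENNReal.ofReal (g x ^ 2 * min 1 (|x - x₀|⁻¹ ^ 2))
      ≤ ENNReal.ofReal (β * (A / (1 + max (μ - |a + 1/2|) 0))) := by
  set c := a + 1/2 with hc
  have hsub : Set.Icc a (a + 1) ⊆ Set.Icc (c - 1) (c + 1) :=
    Set.Icc_subset_Icc (by rw [hc]; linarith) (by rw [hc]; linarith)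
  have hIc : IntegrableOn (fun x => g x ^ 2) (Set.Icc a (a + 1)) volume :=
    (hInt c).mono_set hsub
  have hWc : (0:ℝ) < 1 + max (μ - |c|) 0 := by positivity
  calc ∫⁻ x in Set.Icc a (a + 1), ENNReal.ofReal (g x ^ 2 * min 1 (|x - x₀|⁻¹ ^ 2))
      ≤ ∫⁻ x in Set.Icc a (a + 1), ENNReal.ofReal β * ENNReal.ofReal (g x ^ 2) := by
        apply setLIntegral_mono
        · exact (ENNReal.measurable_ofReal.comp ((hg.pow_const 2))).const_mul _
        · intro x hx
          rw [← ENNReal.ofReal_mul hβ0]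
          apply ENNReal.ofReal_le_ofReal
          have := hβ x hx
          nlinarith [sq_nonneg (g x), min_le_left (1:ℝ) (|x - x₀|⁻¹ ^ 2),
            (hβ x hx)]
    _ = ENNReal.ofReal β * ∫⁻ x in Set.Icc a (a + 1), ENNReal.ofReal (g x ^ 2) :=
        lintegral_const_mul' _ _ ENNReal.ofReal_ne_top
    _ = ENNReal.ofReal β * ENNReal.ofReal (∫ x in Set.Icc a (a + 1), g x ^ 2) := by
        rw [← ofReal_integral_eq_lintegral_ofReal hIc]
        exact Filter.Eventually.of_forall fun x => sq_nonneg _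
    _ ≤ ENNReal.ofReal β * ENNReal.ofReal (A / (1 + max (μ - |c|) 0)) := by
        gcongr
        rw [le_div_iff₀ hWc]
        calc (∫ x in Set.Icc a (a + 1), g x ^ 2) * (1 + max (μ - |c|) 0)
            = (1 + max (μ - |c|) 0) * ∫ x in Set.Icc a (a + 1), g x ^ 2 := by ring
          _ ≤ (1 + max (μ - |c|) 0) * ∫ x in Set.Icc (c - 1) (c + 1), g x ^ 2 := by
              have hmono := setIntegral_mono_set (hInt c)
                  (Filter.Eventually.of_forall fun x => sq_nonneg (g x))
                  (Filter.Eventually.of_forall hsub)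
              have h0 : (0:ℝ) ≤ 1 + max (μ - |c|) 0 := le_of_lt hWc
              exact mul_le_mul_of_nonneg_left hmono h0
          _ ≤ A := hA c
    _ = ENNReal.ofReal (β * (A / (1 + max (μ - |c|) 0))) :=
        (ENNReal.ofReal_mul hβ0).symm

/-- The summation estimate from the proof of Theorem 1.2(iii): there is a universal constant
`C` such that if `μ ≥ 0`, `g` is measurable and locally square integrable, and
`(1+(μ−|x₀|)₊)·∫_{[x₀−1,x₀+1]} g² ≤ A` for every `x₀`, then
`∫ g(x)² min{1, |x−x₀|⁻²} dx ≤ C·A/(1+(μ−|x₀|)₊)` for every `x₀`. -/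
theorem stmt_19 :
    ∃ C : ℝ, 0 < C ∧
      ∀ (μ : ℝ), 0 ≤ μ → ∀ g : ℝ → ℝ, Measurable g →
        (∀ x₀ : ℝ, IntegrableOn (fun x => g x ^ 2) (Set.Icc (x₀ - 1) (x₀ + 1)) volume) →
        ∀ A : ℝ,
        (∀ x₀ : ℝ,
          (1 + max (μ - |x₀|) 0) * ∫ x in Set.Icc (x₀ - 1) (x₀ + 1), g x ^ 2 ≤ A) →
        ∀ x₀ : ℝ,
          (∫⁻ x, ENNReal.ofReal (g x ^ 2 * min 1 (|x - x₀|⁻¹ ^ 2))) ≤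
            ENNReal.ofReal (C * A / (1 + max (μ - |x₀|) 0)) := by
  refine ⟨32, by norm_num, ?_⟩
  intro μ hμ g hg hInt A hA x₀
  set f : ℝ → ENNReal := fun x => ENNReal.ofReal (g x ^ 2 * min 1 (|x - x₀|⁻¹ ^ 2)) with hf
  set W : ℝ := 1 + max (μ - |x₀|) 0 with hWdef
  have hW1 : (1:ℝ) ≤ W := by
    have := le_max_right (μ - |x₀|) (0:ℝ); rw [hWdef]; linarith
  have hW0 : (0:ℝ) < W := lt_of_lt_of_le one_pos hW1
  have hA0 : (0:ℝ) ≤ A := by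
    have h := hA x₀
    have h1 : 0 ≤ ∫ x in Set.Icc (x₀-1) (x₀+1), g x ^ 2 :=
      setIntegral_nonneg measurableSet_Icc (fun x _ => sq_nonneg _)
    nlinarith [le_max_right (μ - |x₀|) (0:ℝ)]
  -- intervals
  set R : ℕ → Set ℝ := fun k => Set.Icc (x₀ + k) (x₀ + k + 1) with hR
  set L : ℕ → Set ℝ := fun k => Set.Icc (x₀ - k - 1) (x₀ - k - 1 + 1) with hL
  have hcover : (⋃ k : ℕ, (R k ∪ L k)) = Set.univ := by
    ext x
    simp only [Set.mem_iUnion, Set.mem_univ, iff_true, Set.mem_union, hR, hL, Set.mem_Icc]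
    rcases le_total x₀ x with h | h
    · refine ⟨⌊x - x₀⌋₊, Or.inl ⟨?_, ?_⟩⟩
      · have := Nat.floor_le (sub_nonneg.2 h); linarith
      · have := Nat.lt_floor_add_one (x - x₀); linarith
    · refine ⟨⌊x₀ - x⌋₊, Or.inr ⟨?_, ?_⟩⟩
      · have := Nat.lt_floor_add_one (x₀ - x); linarith
      · have := Nat.floor_le (sub_nonneg.2 h); linarith
  -- the per-interval target bound
  set t : ℕ → ENNReal :=
    fun k => ENNReal.ofReal (A * (bphi k / max 1 (W - ((k:ℝ) + 1/2)))) with ht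
  have hM0 : ∀ k : ℕ, (0:ℝ) < max 1 (W - ((k:ℝ) + 1/2)) :=
    fun k => lt_of_lt_of_le one_pos (le_max_left _ _)
  -- pointwise bounds for min on the intervals
  have habs_min : ∀ (k : ℕ) (x : ℝ), (k:ℝ) ≤ |x - x₀| →
      min 1 (|x - x₀|⁻¹ ^ 2) ≤ bphi k := by
    intro k x hd
    rcases Nat.eq_zero_or_pos k with rfl | hk
    · rw [bphi_zero]; exact min_le_left _ _
    · rw [bphi_of_pos hk]
      refine (min_le_right _ _).trans ?_
      have hk' : (0:ℝ) < (k:ℝ) := by exact_mod_cast hk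
      have hinv : |x - x₀|⁻¹ ≤ ((k:ℝ))⁻¹ := inv_anti₀ hk' hd
      exact pow_le_pow_left₀ (inv_nonneg.2 (abs_nonneg _)) hinv 2
  -- generic upgrade of `piece` to shifted centers
  have hupg : ∀ (a : ℝ) (k : ℕ), |a + 1/2 - x₀| = (k:ℝ) + 1/2 →
      (∀ x ∈ Set.Icc a (a + 1), min 1 (|x - x₀|⁻¹ ^ 2) ≤ bphi k) →
      ∫⁻ x in Set.Icc a (a + 1), f x ≤ t k := by
    intro a k habs hβ
    have h := piece μ A x₀ g hg hInt hA a (bphi k) (bphi_nonneg k) hβ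
    refine h.trans (ENNReal.ofReal_le_ofReal ?_)
    have hw := weight_lb μ x₀ (a + 1/2)
    rw [habs] at hw
    have hdiv : A / (1 + max (μ - |a + 1/2|) 0) ≤ A / max 1 (W - ((k:ℝ) + 1/2)) := by
      apply div_le_div_of_nonneg_left hA0 ?_ ?_
      · positivity
      · exact hw
    calc bphi k * (A / (1 + max (μ - |a + 1/2|) 0))
        ≤ bphi k * (A / max 1 (W - ((k:ℝ) + 1/2))) :=
          mul_le_mul_of_nonneg_left hdiv (bphi_nonneg k)
      _ = A * (bphi k / max 1 (W - ((k:ℝ) + 1/2))) := by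
          rw [← mul_div_assoc, mul_comm (bphi k) A, mul_div_assoc]
  have hRb : ∀ k : ℕ, ∫⁻ x in R k, f x ≤ t k := by
    intro k
    apply hupg (x₀ + k) k
    · rw [show x₀ + (k:ℝ) + 1/2 - x₀ = (k:ℝ) + 1/2 by ring,
        abs_of_nonneg (by positivity)]
    · intro x hx
      simp only [Set.mem_Icc] at hx
      have hk0 : (0:ℝ) ≤ (k:ℝ) := Nat.cast_nonneg k
      apply habs_min
      rw [abs_of_nonneg (by linarith [hx.1])]
      linarith [hx.1]
  have hLb : ∀ k : ℕ, ∫⁻ x in L k, f x ≤ t k := by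
    intro k
    apply hupg (x₀ - k - 1) k
    · rw [show x₀ - (k:ℝ) - 1 + 1/2 - x₀ = -((k:ℝ) + 1/2) by ring, abs_neg,
        abs_of_nonneg (by positivity)]
    · intro x hx
      simp only [Set.mem_Icc] at hx
      have hk0 : (0:ℝ) ≤ (k:ℝ) := Nat.cast_nonneg k
      apply habs_min
      rw [abs_of_nonpos (by linarith [hx.2])]
      linarith [hx.2]
  -- the series bound
  have hsum_r : ∑' k : ℕ, ENNReal.ofReal (bphi k / max 1 (W - ((k:ℝ) + 1/2)))
      ≤ ENNReal.ofReal (16 / W) := by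
    set N : ℕ := ⌈W/2⌉₊ with hN
    have hN1 : 1 ≤ N := Nat.one_le_ceil_iff.2 (by linarith)
    have hNle : W/2 ≤ (N:ℝ) := Nat.le_ceil _
    have hNlt : (N:ℝ) < W/2 + 1 := Nat.ceil_lt_add_one (by linarith)
    rw [← Summable.sum_add_tsum_nat_add' (k := N) ENNReal.summable]
    have hnear : ∑ i ∈ range N,
        ENNReal.ofReal (bphi i / max 1 (W - ((i:ℝ) + 1/2))) ≤ ENNReal.ofReal (12 / W) := by
      have hterm : ∀ i ∈ range N,
          bphi i / max 1 (W - ((i:ℝ) + 1/2)) ≤ bphi i * 4 / W := by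
        intro i hi
        have hiN : (i:ℝ) ≤ (N:ℝ) - 1 := by
          have : i + 1 ≤ N := Finset.mem_range.1 hi
          have : ((i:ℝ) + 1) ≤ (N:ℝ) := by exact_mod_cast this
          linarith
        have hiW : (i:ℝ) < W/2 := by linarith
        have hMW : W/4 ≤ max 1 (W - ((i:ℝ) + 1/2)) := by
          rcases le_total W 4 with h4 | h4
          · exact le_trans (by linarith) (le_max_left _ _)
          · exact le_trans (by linarith) (le_max_right _ _)
        calc bphi i / max 1 (W - ((i:ℝ) + 1/2)) ≤ bphi i / (W/4) := by
              apply div_le_div_of_nonneg_left (bphi_nonneg i) (by positivity) hMW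
          _ = bphi i * 4 / W := by rw [div_div_eq_mul_div]
      calc ∑ i ∈ range N, ENNReal.ofReal (bphi i / max 1 (W - ((i:ℝ) + 1/2)))
          ≤ ∑ i ∈ range N, ENNReal.ofReal (bphi i * 4 / W) :=
            Finset.sum_le_sum fun i hi => ENNReal.ofReal_le_ofReal (hterm i hi)
        _ = ENNReal.ofReal (∑ i ∈ range N, bphi i * 4 / W) :=
            (ENNReal.ofReal_sum_of_nonneg fun i _ => by
              have := bphi_nonneg i; positivity).symm
        _ ≤ ENNReal.ofReal (12 / W) := by
            apply ENNReal.ofReal_le_ofReal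
            rw [← Finset.sum_div, ← Finset.sum_mul]
            rw [div_le_div_iff₀ (by positivity) (by positivity)]
            nlinarith [sumA N]
    have hfar : ∑' i : ℕ,
        ENNReal.ofReal (bphi (i + N) / max 1 (W - (((i + N : ℕ):ℝ) + 1/2)))
          ≤ ENNReal.ofReal (4 / W) := by
      have h1 : ∀ i : ℕ, bphi (i + N) / max 1 (W - (((i + N : ℕ):ℝ) + 1/2)) ≤ bphi (i + N) :=
        fun i => div_le_self (bphi_nonneg _) (le_max_left 1 _)
      calc ∑' i : ℕ, ENNReal.ofReal (bphi (i + N) / max 1 (W - (((i + N : ℕ):ℝ) + 1/2)))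
          ≤ ∑' i : ℕ, ENNReal.ofReal (bphi (i + N)) :=
            ENNReal.tsum_le_tsum fun i => ENNReal.ofReal_le_ofReal (h1 i)
        _ ≤ ENNReal.ofReal (2 / N) := by
            apply Summable.tsum_le_of_sum_le ENNReal.summable
            intro s
            obtain ⟨K, hK⟩ := s.exists_nat_subset_range
            calc ∑ i ∈ s, ENNReal.ofReal (bphi (i + N))
                ≤ ∑ i ∈ range K, ENNReal.ofReal (bphi (i + N)) :=
                  Finset.sum_le_sum_of_subset hK
              _ = ENNReal.ofReal (∑ i ∈ range K, bphi (i + N)) :=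
                  (ENNReal.ofReal_sum_of_nonneg fun i _ => bphi_nonneg _).symm
              _ ≤ ENNReal.ofReal (2 / N) := by
                  apply ENNReal.ofReal_le_ofReal
                  have h2 : (0:ℝ) ≤ 2 / ((K:ℝ) + N) := by positivity
                  have := sumB N hN1 K
                  push_cast at this ⊢
                  linarith
        _ ≤ ENNReal.ofReal (4 / W) := by
            apply ENNReal.ofReal_le_ofReal
            have hN0 : (0:ℝ) < (N:ℝ) := by exact_mod_cast hN1
            calc (2:ℝ) / N ≤ 2 / (W/2) := by
                  apply div_le_div_of_nonneg_left (by norm_num) (by positivity) hNle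
              _ = 4 / W := by rw [div_div_eq_mul_div]; norm_num
    calc (∑ i ∈ range N, ENNReal.ofReal (bphi i / max 1 (W - ((i:ℝ) + 1/2)))) +
          ∑' i : ℕ, ENNReal.ofReal (bphi (i + N) / max 1 (W - (((i + N : ℕ):ℝ) + 1/2)))
        ≤ ENNReal.ofReal (12 / W) + ENNReal.ofReal (4 / W) := add_le_add hnear hfar
      _ = ENNReal.ofReal (16 / W) := by
          rw [← ENNReal.ofReal_add (by positivity) (by positivity), ← add_div]
          norm_num
  have htsum : ∑' k : ℕ, t k ≤ ENNReal.ofReal (16 * A / W) := by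
    have heq : ∀ k : ℕ, t k =
        ENNReal.ofReal A * ENNReal.ofReal (bphi k / max 1 (W - ((k:ℝ) + 1/2))) := by
      intro k; rw [ht]; exact ENNReal.ofReal_mul hA0
    calc ∑' k : ℕ, t k
        = ENNReal.ofReal A * ∑' k : ℕ,
            ENNReal.ofReal (bphi k / max 1 (W - ((k:ℝ) + 1/2))) := by
          rw [← ENNReal.tsum_mul_left]; exact tsum_congr heq
      _ ≤ ENNReal.ofReal A * ENNReal.ofReal (16 / W) := by gcongr
      _ = ENNReal.ofReal (16 * A / W) := by
          rw [← ENNReal.ofReal_mul hA0]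
          congr 1
          field_simp
  calc ∫⁻ x, f x = ∫⁻ x in Set.univ, f x := (setLIntegral_univ f).symm
    _ = ∫⁻ x in ⋃ k : ℕ, (R k ∪ L k), f x := by rw [hcover]
    _ ≤ ∑' k : ℕ, ∫⁻ x in R k ∪ L k, f x := lintegral_iUnion_le _ _
    _ ≤ ∑' k : ℕ, (t k + t k) :=
        ENNReal.tsum_le_tsum fun k =>
          (lintegral_union_le _ _ _).trans (add_le_add (hRb k) (hLb k))
    _ = ∑' k : ℕ, t k + ∑' k : ℕ, t k := ENNReal.tsum_add
    _ ≤ ENNReal.ofReal (16 * A / W) + ENNReal.ofReal (16 * A / W) :=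
        add_le_add htsum htsum
    _ = ENNReal.ofReal (32 * A / W) := by
        rw [← ENNReal.ofReal_add (by positivity) (by positivity)]
        congr 1
        field_simp; ring
end
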